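/- arXiv:2601.17380 — 16 statements merged into one kernel-verified Lean document; each statement's English description precedes it below -/
import Mathlib

section
/- Let (X, τ) be a first countable Hausdorff topological space, let S : X → Set X be a set-valued map, and let M = (x_i)_{i≥1} be a τ-contractive infinite S-orbit. Then M has a strong accumulation point, i.e., there exists x̄ ∈ X and a subsequence (x_{i_k}) with x_{i_k} → x̄ such that every neighborhood U of x̄ contains {x_i} ∪ S(x_i) for all but finitely many of the indices i_k. -/
open Filter Topology Set

/-- An infinite `S`-orbit: a sequence with `x (i+1) ∈ S (x i)` for all `i`. -/
def IsOrbit {X : Type*} (S : X → Set X) (x : ℕ → X) : Prop :=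
  ∀ i : ℕ, x (i + 1) ∈ S (x i)

/-- A `τ`-contractive orbit: for every open cover `γ` of `X` there exist `U ∈ γ` and
`i₀` such that `x i₀ ∈ U` and `S (x i₀) ⊆ U`. -/
def IsTauContractive {X : Type*} [TopologicalSpace X] (S : X → Set X) (x : ℕ → X) : Prop :=
  ∀ γ : Set (Set X), (∀ U ∈ γ, IsOpen U) → ⋃₀ γ = Set.univ →
    ∃ U ∈ γ, ∃ i₀ : ℕ, x i₀ ∈ U ∧ S (x i₀) ⊆ U

/-- Every `τ`-contractive infinite `S`-orbit in a first countable Hausdorff space has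
a strong accumulation point. -/
theorem tau_contractive_orbit_has_strong_accumulation_point
    {X : Type*} [TopologicalSpace X] [FirstCountableTopology X] [T2Space X]
    (S : X → Set X) (x : ℕ → X)
    (horbit : IsOrbit S x) (hcontr : IsTauContractive S x) :
    ∃ (xbar : X) (φ : ℕ → ℕ), StrictMono φ ∧
      Tendsto (x ∘ φ) atTop (𝓝 xbar) ∧
      ∀ U ∈ 𝓝 xbar, ∀ᶠ k in atTop, x (φ k) ∈ U ∧ S (x (φ k)) ⊆ U := by
  -- Key claim: there is a point `xbar` such that every open neighborhood `U` of `xbar`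
  -- satisfies `x i ∈ U ∧ S (x i) ⊆ U` for infinitely many `i`.
  have key : ∃ xbar : X, ∀ U : Set X, IsOpen U → xbar ∈ U →
      {i : ℕ | x i ∈ U ∧ S (x i) ⊆ U}.Infinite := by
    by_contra hcon
    push_neg at hcon
    choose U hUo hUm hUf using hcon
    -- No orbit point can have `S (x i) ⊆ {x i}`, for otherwise the orbit is eventually
    -- constant equal to `x i`, and then the index set for `U (x i)` would be infinite.
    have hnotSub : ∀ i : ℕ, ∃ w ∈ S (x i), w ≠ x i := by
      intro i
      by_contra hw
      push_neg at hw
      have hsub : S (x i) ⊆ {x i} := fun w hwS => hw w hwS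
      have hconst : ∀ j, i ≤ j → x j = x i := by
        intro j hj
        induction j, hj using Nat.le_induction with
        | base => rfl
        | succ j hj ih =>
          have h1 := horbit j
          rw [ih] at h1
          exact hsub h1
      refine Set.not_infinite.mpr (hUf (x i)) ?_
      have hsubset : Set.Ici i ⊆ {j : ℕ | x j ∈ U (x i) ∧ S (x j) ⊆ U (x i)} := by
        intro j hj
        have hxj := hconst j hj
        refine ⟨by rw [hxj]; exact hUm (x i), ?_⟩
        rw [hxj]
        exact hsub.trans (Set.singleton_subset_iff.mpr (hUm (x i)))
      exact (Set.Ici_infinite i).mono hsubset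
    choose z hzS hzne using hnotSub
    have hIfin : ∀ y, {i : ℕ | x i ∈ U y ∧ S (x i) ⊆ U y}.Finite := fun y =>
      hUf y
    -- The finite "bad" set to remove from `U y`.
    set A : X → Set X := fun y =>
      (x '' {i | (x i ∈ U y ∧ S (x i) ⊆ U y) ∧ x i ≠ y}) ∪
      (z '' {i | (x i ∈ U y ∧ S (x i) ⊆ U y) ∧ x i = y}) with hA
    have hAfin : ∀ y, (A y).Finite := by
      intro y
      apply Set.Finite.union
      · exact ((hIfin y).subset (fun i hi => hi.1)).image x
      · exact ((hIfin y).subset (fun i hi => hi.1)).image z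
    have hyA : ∀ y, y ∉ A y := by
      intro y hy
      rcases hy with ⟨i, ⟨-, hne⟩, rfl⟩ | ⟨i, ⟨-, heq⟩, rfl⟩
      · exact hne rfl
      · exact hzne i heq.symm
    set V : X → Set X := fun y => U y \ A y with hV
    have hVopen : ∀ y, IsOpen (V y) := fun y => (hUo y).sdiff (hAfin y).isClosed
    have hyV : ∀ y, y ∈ V y := fun y => ⟨hUm y, hyA y⟩
    obtain ⟨W, hWγ, i₀, hxW, hSW⟩ := hcontr (Set.range V)
      (by rintro _ ⟨y, rfl⟩; exact hVopen y)
      (Set.eq_univ_of_forall fun y => ⟨V y, ⟨y, rfl⟩, hyV y⟩)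
    obtain ⟨y, rfl⟩ := hWγ
    have hiG : x i₀ ∈ U y ∧ S (x i₀) ⊆ U y := ⟨hxW.1, hSW.trans Set.diff_subset⟩
    by_cases hxy : x i₀ = y
    · exact (hSW (hzS i₀)).2 (Set.mem_union_right _ ⟨i₀, ⟨hiG, hxy⟩, rfl⟩)
    · exact hxW.2 (Set.mem_union_left _ ⟨i₀, ⟨hiG, hxy⟩, rfl⟩)
  obtain ⟨xbar, hxbar⟩ := key
  have hnbhd : ∀ U ∈ 𝓝 xbar, {i : ℕ | x i ∈ U ∧ S (x i) ⊆ U}.Infinite := by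
    intro U hU
    obtain ⟨W, hWU, hWo, hxW⟩ := mem_nhds_iff.mp hU
    exact (hxbar W hWo hxW).mono fun i hi => ⟨hWU hi.1, hi.2.trans hWU⟩
  obtain ⟨B, hB⟩ := (𝓝 xbar).exists_antitone_basis
  have hBmem : ∀ n, B n ∈ 𝓝 xbar := fun n => hB.1.mem_of_mem trivial
  have hgex : ∀ n k : ℕ, ∃ m, (x m ∈ B n ∧ S (x m) ⊆ B n) ∧ k < m := by
    intro n k
    obtain ⟨m, hm, hk⟩ := (hnbhd (B n) (hBmem n)).exists_gt k
    exact ⟨m, hm, hk⟩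
  choose g hg1 hg2 using hgex
  set φ : ℕ → ℕ := fun n => Nat.rec (g 0 0) (fun n ih => g (n + 1) ih) n with hφ
  have hφs : StrictMono φ := strictMono_nat_of_lt_succ fun n => hg2 (n + 1) (φ n)
  have hφmem : ∀ n, x (φ n) ∈ B n ∧ S (x (φ n)) ⊆ B n := by
    intro n
    cases n with
    | zero => exact hg1 0 0
    | succ n => exact hg1 (n + 1) (φ n)
  have h3 : ∀ U ∈ 𝓝 xbar, ∀ᶠ k in atTop, x (φ k) ∈ U ∧ S (x (φ k)) ⊆ U := by
    intro U hU
    obtain ⟨N, -, hN⟩ := hB.1.mem_iff.mp hU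
    filter_upwards [eventually_ge_atTop N] with k hk
    have hBk : B k ⊆ U := (hB.2 hk).trans hN
    exact ⟨hBk (hφmem k).1, (hφmem k).2.trans hBk⟩
  refine ⟨xbar, φ, hφs, ?_, h3⟩
  rw [Filter.tendsto_def]
  intro s hs
  exact (h3 s hs).mono fun k hk => hk.1
end

section
/- Let (X, τ) be a first countable Hausdorff topological space, let S : X → Set X be a set-valued map, and let M = (x_i)_{i≥1} be a τ-contractive infinite S-orbit satisfying property (⋆̄). Then every strong accumulation point x̄ of M satisfies S(x̄) ⊆ {x̄}. -/
open Filter Topology Set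

/-- Property `(⋆̄)`: for each subsequence converging to a point `a` and each
`y ∈ S a`, `y ≠ a`, there is a further subsequence and points `Y j ∈ S` of its terms
converging to `y`. -/
def PropStarBar {X : Type*} [TopologicalSpace X] (S : X → Set X) (x : ℕ → X) : Prop :=
  ∀ φ : ℕ → ℕ, StrictMono φ → ∀ a : X, Tendsto (x ∘ φ) atTop (𝓝 a) →
    ∀ y ∈ S a, y ≠ a →
      ∃ ψ : ℕ → ℕ, StrictMono ψ ∧ ∃ Y : ℕ → X,
        (∀ j : ℕ, Y j ∈ S (x (φ (ψ j)))) ∧ Tendsto Y atTop (𝓝 y)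

/-- A strong accumulation point of the orbit `x`: every neighborhood `U` of it
satisfies `{x i} ∪ S (x i) ⊆ U` for infinitely many `i`. -/
def IsStrongAccPoint {X : Type*} [TopologicalSpace X] (S : X → Set X) (x : ℕ → X)
    (a : X) : Prop :=
  ∀ U ∈ 𝓝 a, {i : ℕ | x i ∈ U ∧ S (x i) ⊆ U}.Infinite

/-- In a first countable Hausdorff space, every strong accumulation point `xbar` of a
`τ`-contractive infinite `S`-orbit satisfying `(⋆̄)` satisfies `S xbar ⊆ {xbar}`. -/
theorem strongAccPoint_of_tau_contractive_star
    {X : Type*} [TopologicalSpace X] [FirstCountableTopology X] [T2Space X]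
    (S : X → Set X) (x : ℕ → X)
    (horbit : IsOrbit S x) (hcontr : IsTauContractive S x) (hstar : PropStarBar S x)
    (xbar : X) (hacc : IsStrongAccPoint S x xbar) :
    S xbar ⊆ {xbar} := by
  intro y hy
  by_contra hne
  have hne' : y ≠ xbar := hne
  obtain ⟨U, hU⟩ := (𝓝 xbar).exists_antitone_basis
  -- pick indices
  have key : ∀ n k : ℕ, ∃ m, (x m ∈ U k ∧ S (x m) ⊆ U k) ∧ n < m := by
    intro n k
    obtain ⟨m, hm, hnm⟩ := (hacc (U k) (hU.mem k)).exists_gt n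
    exact ⟨m, hm, hnm⟩
  choose g hg hglt using key
  set φ : ℕ → ℕ := fun k => Nat.rec (g 0 0) (fun k ih => g ih (k+1)) k with hφ
  have hφs : StrictMono φ := strictMono_nat_of_lt_succ fun k => hglt (φ k) (k+1)
  have hφmem : ∀ k, x (φ k) ∈ U k ∧ S (x (φ k)) ⊆ U k := by
    intro k
    cases k with
    | zero => exact hg 0 0
    | succ k => exact hg (φ k) (k+1)
  have htend : Tendsto (x ∘ φ) atTop (𝓝 xbar) :=
    hU.tendsto fun k => (hφmem k).1
  obtain ⟨ψ, hψ, Y, hYmem, hYtend⟩ := hstar φ hφs xbar htend y hy hne'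
  have hYtend' : Tendsto Y atTop (𝓝 xbar) := by
    refine hU.tendsto fun j => ?_
    have h1 : Y j ∈ U (ψ j) := (hφmem (ψ j)).2 (hYmem j)
    exact hU.antitone (hψ.le_apply) h1
  exact hne' (tendsto_nhds_unique hYtend hYtend')
end

section
/- Let (X, τ) be a first countable T₁ topological space. Suppose that for every set-valued map S : X → Set X and every τ-contractive infinite S-orbit M = (x_i)_{i≥1} satisfying property (⋆̄), every strong accumulation point x̄ of M satisfies S(x̄) ⊆ {x̄}. Then X is Hausdorff. -/
open Filter Topology Set

/-- If in a first countable `T₁` space, for every set-valued map `S` and every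
`τ`-contractive infinite `S`-orbit satisfying `(⋆̄)`, every strong accumulation point
`a` of the orbit satisfies `S a ⊆ {a}`, then the space is Hausdorff. -/
theorem t2Space_of_fixed_point_property
    {X : Type*} [TopologicalSpace X] [FirstCountableTopology X] [T1Space X]
    (h : ∀ (S : X → Set X) (x : ℕ → X), IsOrbit S x → IsTauContractive S x →
      PropStarBar S x → ∀ a : X, IsStrongAccPoint S x a → S a ⊆ {a}) :
    T2Space X := by
  classical
  by_contra hT2
  obtain ⟨a, b, hab, hne⟩ : ∃ a b : X, a ≠ b ∧ (𝓝 a ⊓ 𝓝 b).NeBot := by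
    by_contra hk
    push_neg at hk
    exact hT2 (t2_iff_nhds.mpr fun {x y} hxy =>
      of_not_not fun hne' => hxy.ne (hk x y hne'))
  obtain ⟨U0, hU0⟩ := (𝓝 a).exists_antitone_basis
  obtain ⟨V0, hV0⟩ := (𝓝 b).exists_antitone_basis
  set U : ℕ → Set X := fun n => U0 n ∩ {b}ᶜ with hUdef
  set V : ℕ → Set X := fun n => V0 n ∩ {a}ᶜ with hVdef
  have hUmem : ∀ n, U n ∈ 𝓝 a := fun n =>
    inter_mem (hU0.mem n) (compl_singleton_mem_nhds hab)
  have hVmem : ∀ n, V n ∈ 𝓝 b := fun n =>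
    inter_mem (hV0.mem n) (compl_singleton_mem_nhds hab.symm)
  have hUanti : Antitone U := fun m n hmn =>
    inter_subset_inter_left _ (hU0.antitone hmn)
  have hVanti : Antitone V := fun m n hmn =>
    inter_subset_inter_left _ (hV0.antitone hmn)
  have hUbasis : ∀ W ∈ 𝓝 a, ∃ n, U n ⊆ W := by
    intro W hW
    obtain ⟨n, -, hn⟩ := hU0.toHasBasis.mem_iff.mp hW
    exact ⟨n, Set.inter_subset_left.trans hn⟩
  have hVbasis : ∀ W ∈ 𝓝 b, ∃ n, V n ⊆ W := by
    intro W hW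
    obtain ⟨n, -, hn⟩ := hV0.toHasBasis.mem_iff.mp hW
    exact ⟨n, Set.inter_subset_left.trans hn⟩
  have hbU : ∀ n, b ∉ U n := fun n hb => hb.2 rfl
  have haV : ∀ n, a ∉ V n := fun n ha => ha.2 rfl
  -- key nonemptiness lemma
  have hkey : ∀ (n : ℕ) (F : Set X), F.Finite → a ∉ F →
      ((U n ∩ V n) \ F).Nonempty := by
    intro n F hF haF
    have hFc : Fᶜ ∈ 𝓝 a := hF.isClosed.isOpen_compl.mem_nhds haF
    have hmem : (U n ∩ Fᶜ) ∩ V n ∈ 𝓝 a ⊓ 𝓝 b :=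
      inter_mem_inf (inter_mem (hUmem n) hFc) (hVmem n)
    obtain ⟨p, hp⟩ := hne.nonempty_of_mem hmem
    exact ⟨p, ⟨⟨hp.1.1, hp.2⟩, hp.1.2⟩⟩
  -- choose an injective sequence w n ∈ U n ∩ V n
  have hpickex : ∀ (n : ℕ) (l : List X),
      ((U n ∩ V n) \ {x | x ∈ l ∧ x ≠ a}).Nonempty := by
    intro n l
    refine hkey n _ (l.finite_toSet.subset fun x hx => hx.1) fun hx => hx.2 rfl
  set pick : ℕ → List X → X := fun n l => (hpickex n l).choose with hpickdef
  have hpick : ∀ n l, pick n l ∈ (U n ∩ V n) \ {x | x ∈ l ∧ x ≠ a} :=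
    fun n l => (hpickex n l).choose_spec
  have hpick1 : ∀ n l, pick n l ∈ U n ∩ V n := fun n l => (hpick n l).1
  have hpicknotmem : ∀ n l, pick n l ∉ l := by
    intro n l hmem
    have h2 : pick n l ≠ a := fun he => haV n (he ▸ (hpick1 n l).2)
    exact (hpick n l).2 ⟨hmem, h2⟩
  set L : ℕ → List X := fun n => Nat.rec [] (fun m l => l ++ [pick m l]) n with hLdef
  set w : ℕ → X := fun n => pick n (L n) with hwdef
  have hLsucc : ∀ n, L (n + 1) = L n ++ [w n] := fun n => rfl
  have hmemL : ∀ m n, m < n → w m ∈ L n := by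
    intro m n
    induction n with
    | zero => exact fun hlt => absurd hlt (Nat.not_lt_zero m)
    | succ k ih =>
      intro hlt
      rw [hLsucc k]
      rcases Nat.lt_succ_iff_lt_or_eq.mp hlt with h' | h'
      · exact List.mem_append_left _ (ih h')
      · subst h'; exact List.mem_append_right _ (List.mem_singleton_self _)
  have hwinj : Function.Injective w := by
    intro m n hmn
    by_contra hne'
    rcases Nat.lt_or_ge m n with hlt | hge
    · refine hpicknotmem n (L n) ?_
      show w n ∈ L n
      rw [← hmn]; exact hmemL m n hlt
    · have hlt : n < m := lt_of_le_of_ne hge (Ne.symm hne')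
      refine hpicknotmem m (L m) ?_
      show w m ∈ L m
      rw [hmn]; exact hmemL n m hlt
  have hwmem : ∀ n, w n ∈ U n ∩ V n := fun n => hpick1 n (L n)
  -- the set of ω-accumulation points of the range of w
  set C : Set X := {p | ∀ O ∈ 𝓝 p, (O ∩ Set.range w).Infinite} with hCdef
  -- choose a subsequence all of whose terms are outside C, or (if that is
  -- impossible) all inside C with good approximation properties
  obtain ⟨σ, hσmono, hE⟩ :
      ∃ σ : ℕ → ℕ, StrictMono σ ∧
        ((∀ j, w (σ j) ∉ C) ∨
         ((∀ j, w (σ j) ∈ C) ∧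
          ∀ p ∈ C, ∀ O ∈ 𝓝 p, {t : ℕ | w (σ t) ∈ O}.Infinite)) := by
    by_cases hdich : {n : ℕ | w n ∉ C}.Infinite
    · exact ⟨Nat.nth _, Nat.nth_strictMono hdich,
        Or.inl fun j => Nat.nth_mem_of_infinite hdich j⟩
    · rw [Set.not_infinite] at hdich
      have hcompl : {n : ℕ | w n ∈ C}.Infinite := by
        refine hdich.infinite_compl.mono ?_
        intro n hn
        exact of_not_not hn
      refine ⟨Nat.nth _, Nat.nth_strictMono hcompl,
        Or.inr ⟨fun j => Nat.nth_mem_of_infinite hcompl j, ?_⟩⟩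
      intro p hp O hO
      by_contra hfin
      rw [Set.not_infinite] at hfin
      have hsub : O ∩ Set.range w ⊆
          (w '' {n | w n ∉ C}) ∪
          ((fun t => w (Nat.nth (fun n => w n ∈ C) t)) '' {t | w (Nat.nth (fun n => w n ∈ C) t) ∈ O}) := by
        rintro q ⟨hqO, n, rfl⟩
        by_cases hnC : w n ∈ C
        · right
          have hmem : n ∈ Set.range (Nat.nth fun n => w n ∈ C) := by
            rw [Nat.range_nth_of_infinite hcompl]; exact hnC
          obtain ⟨t, rfl⟩ := hmem
          exact ⟨t, hqO, rfl⟩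
        · exact Or.inl ⟨n, hnC, rfl⟩
      have hfin2 : (O ∩ Set.range w).Finite :=
        ((hdich.image w).union (hfin.image _)).subset hsub
      exact hp O hO hfin2
  set x : ℕ → X := fun j => w (σ j) with hxdef
  have hxinj : Function.Injective x := hwinj.comp hσmono.injective
  have hxmem : ∀ j, x j ∈ U j ∩ V j := fun j =>
    ⟨hUanti hσmono.le_apply (hwmem (σ j)).1, hVanti hσmono.le_apply (hwmem (σ j)).2⟩
  have hxb : ∀ j, x j ≠ b := fun j he => hbU j (he ▸ (hxmem j).1)
  set S : X → Set X := fun z =>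
    if z = b then {a} else {y | ∃ m t : ℕ, x m = z ∧ m < t ∧ x t = y} with hSdef
  have hSx : ∀ i, S (x i) = {y | ∃ t, i < t ∧ x t = y} := by
    intro i
    rw [hSdef]
    simp only [if_neg (hxb i)]
    ext y
    constructor
    · rintro ⟨m, t, hm, hmt, rfl⟩
      exact ⟨t, hxinj hm ▸ hmt, rfl⟩
    · rintro ⟨t, hit, rfl⟩
      exact ⟨i, t, rfl, hit, rfl⟩
  have hSb : S b = {a} := by rw [hSdef]; simp
  -- main containment fact: deep tails are inside any neighborhood of b
  have hmain : ∀ W ∈ 𝓝 b, ∃ t₀ : ℕ, ∀ i ≥ t₀, x i ∈ W ∧ S (x i) ⊆ W := by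
    intro W hW
    obtain ⟨t₀, ht₀⟩ := hVbasis W hW
    refine ⟨t₀, fun i hi => ⟨ht₀ (hVanti hi (hxmem i).2), ?_⟩⟩
    intro y hy
    rw [hSx i] at hy
    obtain ⟨t, hit, rfl⟩ := hy
    exact ht₀ (hVanti (le_trans hi (le_of_lt hit)) (hxmem t).2)
  have horbit : IsOrbit S x := by
    intro i
    rw [hSx i]
    exact ⟨i + 1, Nat.lt_succ_self i, rfl⟩
  have hcontr : IsTauContractive S x := by
    intro γ hopen hcover
    have hbmem : b ∈ ⋃₀ γ := hcover ▸ Set.mem_univ b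
    obtain ⟨W, hWγ, hbW⟩ := hbmem
    obtain ⟨t₀, ht₀⟩ := hmain W ((hopen W hWγ).mem_nhds hbW)
    exact ⟨W, hWγ, t₀, ht₀ t₀ le_rfl⟩
  have hacc : IsStrongAccPoint S x b := by
    intro W hW
    obtain ⟨t₀, ht₀⟩ := hmain W hW
    exact (Set.Ici_infinite t₀).mono fun i hi => ht₀ i hi
  have hstar : PropStarBar S x := by
    intro φ hφ a' hconv y hyS hyne
    by_cases hb' : a' = b
    · -- limit is b; the only candidate y is a, approximated by successors
      subst hb'
      rw [hSb] at hyS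
      have hya : y = a := hyS
      subst hya
      refine ⟨id, strictMono_id, fun j => x (φ j + 1), fun j => ?_, ?_⟩
      · rw [show φ (id j) = φ j from rfl, hSx (φ j)]
        exact ⟨φ j + 1, Nat.lt_succ_self _, rfl⟩
      · rw [tendsto_def]
        intro W hW
        obtain ⟨n₀, hn₀⟩ := hUbasis W hW
        rw [mem_atTop_sets]
        refine ⟨n₀, fun j hj => ?_⟩
        have h1 : n₀ ≤ φ j + 1 := le_trans (le_trans hj hφ.le_apply) (Nat.le_succ _)
        exact hn₀ (hUanti h1 (hxmem (φ j + 1)).1)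
    · -- limit is some orbit point x m
      have hyS' : ∃ m t : ℕ, x m = a' ∧ m < t ∧ x t = y := by
        rw [hSdef] at hyS
        simpa only [if_neg hb', Set.mem_setOf_eq] using hyS
      obtain ⟨m, t, hma, hmt, hty⟩ := hyS'
      rcases hE with hE1 | hE2
      · -- impossible: no subsequence converges to an orbit point in this case
        exfalso
        apply hE1 m
        subst hma
        intro O hO
        have hev := tendsto_def.mp hconv O hO
        rw [mem_atTop_sets] at hev
        obtain ⟨J, hJ⟩ := hev
        have hinj2 : Function.Injective fun j => x (φ (J + j)) :=
          hxinj.comp (hφ.injective.comp fun _ _ he => Nat.add_left_cancel he)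
        have hrange : Set.range (fun j => x (φ (J + j))) ⊆ O ∩ Set.range w := by
          rintro q ⟨j, rfl⟩
          exact ⟨hJ (J + j) (Nat.le_add_right J j), ⟨σ (φ (J + j)), rfl⟩⟩
        exact (Set.infinite_range_of_injective hinj2).mono hrange
      · -- every orbit point is an ω-accumulation point: approximate y directly
        obtain ⟨hallC, happrox⟩ := hE2
        have hyC : y ∈ C := hty ▸ hallC t
        obtain ⟨Oy, hOy⟩ := (𝓝 y).exists_antitone_basis
        have hg : ∀ j : ℕ, ∃ s : ℕ, φ j < s ∧ x s ∈ Oy j := by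
          intro j
          have hinf := happrox y hyC (Oy j) (hOy.mem j)
          obtain ⟨s, hs⟩ := (hinf.diff (Set.finite_Iic (φ j))).nonempty
          exact ⟨s, not_le.mp (by simpa using hs.2), hs.1⟩
        choose g hg1 hg2 using hg
        refine ⟨id, strictMono_id, fun j => x (g j), fun j => ?_, ?_⟩
        · rw [show φ (id j) = φ j from rfl, hSx (φ j)]
          exact ⟨g j, hg1 j, rfl⟩
        · rw [tendsto_def]
          intro W hW
          obtain ⟨r, -, hr⟩ := hOy.toHasBasis.mem_iff.mp hW
          rw [mem_atTop_sets]
          refine ⟨r, fun j hj => ?_⟩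
          exact hr (hOy.antitone hj (hg2 j))
  have hfinal := h S x horbit hcontr hstar b hacc
  rw [hSb] at hfinal
  exact hab (hfinal rfl)
end

section
/- Let (X, τ) be a first countable Hausdorff topological space and let f : X → ℝ ∪ {+∞} be a proper function that is lower semicontinuous from above. Define S_f(x) := {y ∈ X : f(y) < f(x)}. If there exists a τ-contractive infinite S_f-orbit, then f attains a strong minimum: there exists x̄ with f(x̄) = inf_X f and every minimizing sequence (z_i) (i.e. f(z_i) → inf_X f) converges to x̄. -/
open Filter Topology Set

/-- `f` is lower semicontinuous from above: for every sequence in the effective domain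
of `f` converging to `a` with `(f (x i))` decreasing, `f a ≤ f (x i)` for all `i`. -/
def LscFromAbove {X : Type*} [TopologicalSpace X] (f : X → EReal) : Prop :=
  ∀ (x : ℕ → X) (a : X), (∀ i : ℕ, f (x i) < ⊤) → Tendsto x atTop (𝓝 a) →
    Antitone (fun i : ℕ => f (x i)) → ∀ i : ℕ, f a ≤ f (x i)

/-- If `f : X → ℝ ∪ {+∞}` is proper and lower semicontinuous from above on a first
countable Hausdorff space, and there is a `τ`-contractive infinite orbit of
`S_f x := {y : f y < f x}`, then `f` attains a strong minimum. -/
theorem strong_minimum_of_tau_contractive_orbit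
    {X : Type*} [TopologicalSpace X] [FirstCountableTopology X] [T2Space X]
    (f : X → EReal) (hreal : ∀ x : X, f x ≠ ⊥) (hproper : ∃ x : X, f x ≠ ⊤)
    (hlsc : LscFromAbove f)
    (x : ℕ → X) (horbit : IsOrbit (fun x => {y : X | f y < f x}) x)
    (hcontr : IsTauContractive (fun x => {y : X | f y < f x}) x) :
    ∃ xbar : X, f xbar = ⨅ z : X, f z ∧
      ∀ z : ℕ → X, Tendsto (fun i => f (z i)) atTop (𝓝 (⨅ w : X, f w)) →
        Tendsto z atTop (𝓝 xbar) := by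
  classical
  have hanti : StrictAnti fun i => f (x i) := strictAnti_nat_of_succ_lt fun n => horbit n
  -- Step 1: the orbit has a cluster point
  have hclus : ∃ p : X, ∀ U : Set X, IsOpen U → p ∈ U → {i | x i ∈ U}.Infinite := by
    by_contra h
    push_neg at h
    obtain ⟨U, hUγ, i₀, hi₀U, hSU⟩ :=
      hcontr {U | IsOpen U ∧ ¬ {i | x i ∈ U}.Infinite} (fun U hU => hU.1) (by
        ext p
        simp only [mem_sUnion, mem_univ, iff_true]
        obtain ⟨U, hUo, hpU, hfin⟩ := h p
        exact ⟨U, ⟨hUo, fun hi => hi hfin⟩, hpU⟩)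
    apply hUγ.2
    apply Set.Infinite.mono (s := Set.Ici i₀)
    · intro j hj
      rcases eq_or_lt_of_le (Set.mem_Ici.mp hj) with rfl | hlt
      · exact hi₀U
      · exact hSU (hanti hlt)
    · exact Set.Ici_infinite i₀
  obtain ⟨xbar, hxbar⟩ := hclus
  have hmcp : MapClusterPt xbar atTop x := by
    rw [mapClusterPt_iff_frequently]
    intro s hs
    obtain ⟨U, hUs, hUo, hpU⟩ := mem_nhds_iff.mp hs
    exact ((Nat.frequently_atTop_iff_infinite).2 (hxbar U hUo hpU)).mono fun i hi => hUs hi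
  obtain ⟨φ, hφ, hφt⟩ := TopologicalSpace.FirstCountableTopology.tendsto_subseq hmcp
  -- Step 2: f xbar < f (x i) for all i
  have hφmono : StrictMono fun k => φ (k + 1) := fun a b hab => hφ (by omega)
  have hle : ∀ k : ℕ, f xbar ≤ f (x (φ (k + 1))) := by
    apply hlsc (fun k => x (φ (k + 1))) xbar
    · intro k
      have h1 : 1 ≤ φ (k + 1) := le_trans (by omega) (hφ.le_apply)
      obtain ⟨m, hm⟩ : ∃ m, φ (k + 1) = m + 1 := ⟨φ (k + 1) - 1, by omega⟩
      rw [hm]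
      exact lt_of_lt_of_le (horbit m) le_top
    · exact hφt.comp (tendsto_add_atTop_nat 1)
    · exact (hanti.comp_strictMono hφmono).antitone
  have hlt : ∀ i : ℕ, f xbar < f (x i) := by
    intro i
    have h1 : i < φ (i + 1) := lt_of_lt_of_le (by omega) hφ.le_apply
    exact lt_of_le_of_lt (hle i) (hanti h1)
  -- Step 3: xbar is a global minimum
  have hmin : ∀ y : X, f xbar ≤ f y := by
    intro y
    by_contra hy
    push_neg at hy
    have hne : xbar ≠ y := fun h => absurd hy (by rw [h]; exact lt_irrefl _)
    obtain ⟨U, hUγ, i₀, hi₀U, hSU⟩ :=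
      hcontr {({xbar}ᶜ : Set X), ({y}ᶜ : Set X)}
        (by rintro U (rfl | rfl) <;> exact isOpen_compl_singleton)
        (by
          ext p
          simp only [mem_sUnion, mem_univ, iff_true]
          by_cases hp : p = xbar
          · exact ⟨{y}ᶜ, by simp, by simp [hp, hne]⟩
          · exact ⟨{xbar}ᶜ, by simp, by simp [hp]⟩)
    have hxS : xbar ∈ {y' | f y' < f (x i₀)} := hlt i₀
    have hyS : y ∈ {y' | f y' < f (x i₀)} := lt_trans hy (hlt i₀)
    rcases hUγ with rfl | rfl
    · exact (hSU hxS) rfl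
    · exact (hSU hyS) rfl
  have hinf : f xbar = ⨅ z : X, f z := le_antisymm (le_iInf hmin) (iInf_le _ _)
  refine ⟨xbar, hinf, ?_⟩
  -- Step 4: strong minimum
  intro z hz
  rw [← hinf] at hz
  rw [tendsto_nhds]
  intro W hWo hxW
  obtain ⟨U, hUγ, i₀, hi₀U, hSU⟩ :=
    hcontr {W, ({xbar}ᶜ : Set X)}
      (by rintro U (rfl | rfl); exacts [hWo, isOpen_compl_singleton])
      (by
        ext p
        simp only [mem_sUnion, mem_univ, iff_true]
        by_cases hp : p = xbar
        · exact ⟨W, by simp, hp ▸ hxW⟩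
        · exact ⟨{xbar}ᶜ, by simp, by simp [hp]⟩)
  have hxS : xbar ∈ {y' | f y' < f (x i₀)} := hlt i₀
  rcases hUγ with rfl | rfl
  · have hev : ∀ᶠ i in atTop, f (z i) ∈ Set.Iio (f (x i₀)) :=
      hz.eventually (Iio_mem_nhds (hlt i₀))
    exact hev.mono fun i hi => hSU hi
  · exact absurd (hSU hxS) (by simp)
end

section
/- Let (X, τ) be a first countable Hausdorff topological space and let (C_i)_{i≥1} be a sequence of nonempty closed subsets of X with C_{i+1} ⊆ C_i for all i. Suppose that for every open cover γ of X there exist U ∈ γ and j₀ ∈ ℕ such that C_{j₀} ⊆ U. Then there exists x̄ ∈ X such that ⋂_{i=1}^∞ C_i = {x̄}. -/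
open Filter Topology Set

/-- Generalized Cantor intersection theorem: in a first countable Hausdorff space, if
`(C i)` is a decreasing sequence of nonempty closed sets such that every open cover of
`X` admits a member containing some `C j₀`, then the intersection of all `C i` is a
singleton. -/
theorem cantor_intersection_of_cover_condition
    {X : Type*} [TopologicalSpace X] [FirstCountableTopology X] [T2Space X]
    (C : ℕ → Set X)
    (hne : ∀ i : ℕ, (C i).Nonempty)
    (hclosed : ∀ i : ℕ, IsClosed (C i))
    (hnested : ∀ i : ℕ, C (i + 1) ⊆ C i)
    (hcover : ∀ γ : Set (Set X), (∀ U ∈ γ, IsOpen U) → ⋃₀ γ = Set.univ →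
      ∃ U ∈ γ, ∃ j₀ : ℕ, C j₀ ⊆ U) :
    ∃ xbar : X, ⋂ i : ℕ, C i = {xbar} := by
  have hmono : ∀ m n : ℕ, m ≤ n → C n ⊆ C m := by
    intro m n h
    induction h with
    | refl => exact subset_rfl
    | step _ ih => exact (hnested _).trans ih
  -- nonemptiness of the intersection
  have hint : (⋂ i, C i).Nonempty := by
    by_contra h
    rw [Set.not_nonempty_iff_eq_empty] at h
    have hcov : ⋃₀ (Set.range fun i => (C i)ᶜ) = Set.univ := by
      ext x
      simp only [Set.mem_sUnion, Set.mem_range, Set.mem_univ, iff_true]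
      have : x ∉ ⋂ i, C i := by rw [h]; exact Set.notMem_empty x
      rw [Set.mem_iInter] at this
      push_neg at this
      obtain ⟨i, hi⟩ := this
      exact ⟨(C i)ᶜ, ⟨i, rfl⟩, hi⟩
    obtain ⟨U, hU, j₀, hj⟩ := hcover _
      (by rintro U ⟨i, rfl⟩; exact (hclosed i).isOpen_compl) hcov
    obtain ⟨i, rfl⟩ := hU
    obtain ⟨x, hx⟩ := hne (max i j₀)
    exact hj (hmono j₀ _ (le_max_right _ _) hx) (hmono i _ (le_max_left _ _) hx)
  obtain ⟨x, hx⟩ := hint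
  refine ⟨x, subset_antisymm ?_ ?_⟩
  · intro z hz
    by_contra hzx
    have hne' : z ≠ x := hzx
    have hcov : ⋃₀ ({({x}ᶜ : Set X), ({z}ᶜ : Set X)} : Set (Set X)) = Set.univ := by
      ext y
      simp only [Set.mem_sUnion, Set.mem_insert_iff, Set.mem_singleton_iff,
        Set.mem_univ, iff_true]
      by_cases hy : y = x
      · exact ⟨({z}ᶜ : Set X), Or.inr rfl, by simp [hy, (Ne.symm hne')]⟩
      · exact ⟨({x}ᶜ : Set X), Or.inl rfl, by simp [hy]⟩
    obtain ⟨U, hU, j₀, hj⟩ := hcover _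
      (by
        rintro U (rfl | rfl)
        · exact isOpen_compl_singleton
        · exact isOpen_compl_singleton) hcov
    have hxj : x ∈ C j₀ := Set.mem_iInter.mp hx j₀
    have hzj : z ∈ C j₀ := Set.mem_iInter.mp hz j₀
    rcases hU with rfl | rfl
    · exact hj hxj rfl
    · exact hj hzj rfl
  · intro z hz
    rw [Set.mem_singleton_iff] at hz
    subst hz
    exact hx
end

section
/- Let (X, τ) be an arbitrary topological space, let S : X → Set X be a set-valued map whose graph Gr S := {(x,y) ∈ X × X : y ∈ S(x)} is closed in the product topology on X × X, and let M = (x_i)_{i≥1} be an infinite S-orbit. If for every open cover γ of X there exist i₀ ∈ ℕ and U ∈ γ such that S(x_{i₀}) ⊆ U and x_{i₀+2} ∈ U, then S has a fixed point, i.e., there exists x ∈ X with x ∈ S(x). -/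
open Filter Topology Set

/-- If `S` has a closed graph and there is an infinite `S`-orbit `x` such that for
every open cover `γ` of `X` there exist `i₀` and `U ∈ γ` with `S (x i₀) ⊆ U` and
`x (i₀ + 2) ∈ U`, then `S` has a fixed point. -/
theorem fixed_point_of_closed_graph_orbit
    {X : Type*} [TopologicalSpace X]
    (S : X → Set X) (hgraph : IsClosed {q : X × X | q.2 ∈ S q.1})
    (x : ℕ → X) (horbit : IsOrbit S x)
    (h : ∀ γ : Set (Set X), (∀ U ∈ γ, IsOpen U) → ⋃₀ γ = Set.univ →
      ∃ i₀ : ℕ, ∃ U ∈ γ, S (x i₀) ⊆ U ∧ x (i₀ + 2) ∈ U) :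
    ∃ a : X, a ∈ S a := by
  by_contra hfix
  push_neg at hfix
  have hopen : IsOpen {q : X × X | q.2 ∈ S q.1}ᶜ := hgraph.isOpen_compl
  -- for each a, choose open u a, v a with a ∈ u a, a ∈ v a, u a ×ˢ v a disjoint from graph
  have key : ∀ a : X, ∃ u v : Set X, IsOpen u ∧ IsOpen v ∧ a ∈ u ∧ a ∈ v ∧
      u ×ˢ v ⊆ {q : X × X | q.2 ∈ S q.1}ᶜ := by
    intro a
    have ha : (a, a) ∈ {q : X × X | q.2 ∈ S q.1}ᶜ := hfix a
    rcases isOpen_prod_iff.1 hopen a a ha with ⟨u, v, hu, hv, hau, hav, hsub⟩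
    exact ⟨u, v, hu, hv, hau, hav, hsub⟩
  choose u v hu hv hau hav hsub using key
  set W : X → Set X := fun a => u a ∩ v a with hW
  have hcover : ⋃₀ (Set.range W) = Set.univ := by
    apply Set.eq_univ_of_forall
    intro a
    exact ⟨W a, ⟨a, rfl⟩, hau a, hav a⟩
  obtain ⟨i₀, U, hUmem, hSsub, hx2⟩ := h (Set.range W)
    (by rintro U ⟨a, rfl⟩; exact (hu a).inter (hv a)) hcover
  obtain ⟨a, rfl⟩ := hUmem
  have h1 : x (i₀ + 1) ∈ W a := hSsub (horbit i₀)
  have h2 : x (i₀ + 2) ∈ S (x (i₀ + 1)) := horbit (i₀ + 1)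
  exact hsub a (show (x (i₀+1), x (i₀+2)) ∈ u a ×ˢ v a from ⟨h1.1, hx2.2⟩) h2
end

section
/- Let (X, τ, p) be a premetric space. Then for every sequence (x_n) in X and every x ∈ X, the sequence x_n converges to x in τ if and only if p(x, x_n) → 0. -/
open Filter Topology Set

/-- `(X, τ, p)` is a premetric space (p-space): `p : X × X → [0, ∞)` satisfies
(i) `p x y = 0 ↔ x = y`; (ii) `p x (u n) → 0` implies `u n → x`;
(iii) `u n → x` implies `p (u (n+1)) (u n) → 0`. (First countability of the
topology is imposed as a separate instance hypothesis.) -/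
def IsPremetric {X : Type*} [TopologicalSpace X] (p : X → X → ℝ) : Prop :=
  (∀ x y : X, 0 ≤ p x y) ∧
  (∀ x y : X, p x y = 0 ↔ x = y) ∧
  (∀ (x : X) (u : ℕ → X),
    Tendsto (fun n => p x (u n)) atTop (𝓝 0) → Tendsto u atTop (𝓝 x)) ∧
  (∀ (x : X) (u : ℕ → X),
    Tendsto u atTop (𝓝 x) → Tendsto (fun n => p (u (n + 1)) (u n)) atTop (𝓝 0))

/-- In a premetric space, `u n → x` in `τ` iff `p x (u n) → 0`. -/
theorem tendsto_iff_premetric_tendsto_zero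
    {X : Type*} [TopologicalSpace X] [FirstCountableTopology X]
    (p : X → X → ℝ) (hp : IsPremetric p) (u : ℕ → X) (x : X) :
    Tendsto u atTop (𝓝 x) ↔ Tendsto (fun n => p x (u n)) atTop (𝓝 0) := by
  obtain ⟨h0, h1, h2, h3⟩ := hp
  constructor
  · intro hu
    -- interleaved sequence: v (2k) = u k, v (2k+1) = x
    set v : ℕ → X := fun n => if n % 2 = 0 then u (n / 2) else x with hv
    have hvtend : Tendsto v atTop (𝓝 x) := by
      intro s hs
      rw [mem_map, mem_atTop_sets]
      obtain ⟨N, hN⟩ := mem_atTop_sets.1 (hu hs)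
      refine ⟨2 * N, fun n hn => ?_⟩
      show v n ∈ s
      by_cases h : n % 2 = 0
      · simp only [v, if_pos h]
        exact hN (n / 2) (by omega)
      · simp only [v, if_neg h]
        exact mem_of_mem_nhds hs
    have key := h3 x v hvtend
    have : Tendsto (fun k => p (v (2 * k + 1)) (v (2 * k))) atTop (𝓝 0) :=
      key.comp (tendsto_atTop_atTop.2 fun b => ⟨b, fun a ha => by omega⟩)
    convert this using 2 with k
    have e1 : v (2 * k + 1) = x := by simp [v, Nat.mul_add_mod]
    have e2 : v (2 * k) = u k := by simp [v, Nat.mul_div_cancel_left k (by norm_num : 0 < 2)]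
    rw [e1, e2]
  · exact h2 x u
end

section
/- Let (X, τ, p) be a premetric space. Then (X, τ) is a T₁ topological space, i.e., singletons are closed. -/
open Filter Topology Set

/-- A premetric space is a `T₁` space. -/
theorem t1Space_of_premetric
    {X : Type*} [TopologicalSpace X] [FirstCountableTopology X]
    (p : X → X → ℝ) (hp : IsPremetric p) :
    T1Space X := by
  obtain ⟨_, h2, _, h4⟩ := hp
  rw [t1Space_iff_specializes_imp_eq]
  intro x y hxy
  -- `x ⤳ y` means the constant sequence `x` converges to `y`
  have hpure : Tendsto (fun _ : ℕ => x) atTop (𝓝 y) := by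
    rw [specializes_iff_pure] at hxy
    exact tendsto_pure.2 (Eventually.of_forall fun n => rfl) |>.mono_right hxy
  -- interleaved sequence x, y, x, y, ... converges to y
  set u : ℕ → X := fun n => if n % 2 = 0 then x else y with hu
  have hmem : ∀ s : Set X, y ∈ s → x ∈ s → ∀ n, u n ∈ s := by
    intro s hy hx n
    by_cases h : n % 2 = 0 <;> simp [hu, h, hx, hy]
  have htend : Tendsto u atTop (𝓝 y) := by
    rw [tendsto_nhds]
    intro s hs hy
    have hx : x ∈ s := hxy.mem_open hs hy
    exact Eventually.of_forall (hmem s hy hx)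
  have hlim := h4 y u htend
  have hconst : Tendsto (fun n : ℕ => p (u (2 * n + 1)) (u (2 * n))) atTop (𝓝 0) :=
    hlim.comp (tendsto_atTop_atTop_of_monotone (fun a b h => by omega) (fun b => ⟨b, by omega⟩))
  have heq : (fun n : ℕ => p (u (2 * n + 1)) (u (2 * n))) = fun _ => p y x := by
    funext n
    have h1 : (2 * n + 1) % 2 = 1 := by omega
    have h0 : (2 * n) % 2 = 0 := by omega
    simp [hu, h1, h0]
  rw [heq] at hconst
  have : p y x = 0 := tendsto_nhds_unique tendsto_const_nhds hconst
  exact ((h2 y x).1 this).symm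
end

section
/- Let (X, τ, p) be a Hausdorff premetric space, let S : X → Set X be a set-valued map, and let M be a τ-contractive infinite S-orbit. Then M is p-contractive. -/
open Filter Topology Set

/-- `p_C(x) = sup_{y ∈ C} p(y, x)`, computed in `ℝ≥0∞` to avoid unbounded suprema. -/
noncomputable def pSup {X : Type*} (p : X → X → ℝ) (C : Set X) (x : X) : ENNReal :=
  ⨆ y ∈ C, ENNReal.ofReal (p y x)

/-- A p-contractive orbit: some subsequence converges to a point of `X` and
`p_{S(x_{i_k})}(x_{i_k}) → 0`. -/
def IsPContractive {X : Type*} [TopologicalSpace X] (p : X → X → ℝ) (S : X → Set X)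
    (x : ℕ → X) : Prop :=
  ∃ φ : ℕ → ℕ, StrictMono φ ∧ (∃ a : X, Tendsto (x ∘ φ) atTop (𝓝 a)) ∧
    Tendsto (fun k => pSup p (S (x (φ k))) (x (φ k))) atTop (𝓝 0)

lemma exists_open_small {X : Type*} [TopologicalSpace X] [FirstCountableTopology X]
    (p : X → X → ℝ)
    (hp3 : ∀ (x : X) (u : ℕ → X),
      Tendsto u atTop (𝓝 x) → Tendsto (fun n => p (u (n + 1)) (u n)) atTop (𝓝 0))
    (a : X) (ε : ℝ) (hε : 0 < ε) :
    ∃ V : Set X, IsOpen V ∧ a ∈ V ∧ ∀ y ∈ V, ∀ z ∈ V, p y z < ε := by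
  by_contra h
  push_neg at h
  obtain ⟨N, hN⟩ := (𝓝 a).exists_antitone_basis
  choose O hOsub hOopen hOa using fun k => mem_nhds_iff.mp (hN.mem k)
  choose y hy z hz hpz using fun k => h (O k) (hOopen k) (hOa k)
  set u : ℕ → X := fun n => if n % 2 = 0 then z (n / 2) else y (n / 2) with hu_def
  have huO : ∀ n, u n ∈ O (n / 2) := by
    intro n
    simp only [hu_def]
    split
    · exact hz _
    · exact hy _
  have hu : Tendsto u atTop (𝓝 a) := by
    rw [hN.toHasBasis.tendsto_right_iff]
    intro k _
    filter_upwards [eventually_ge_atTop (2 * k)] with n hn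
    have hk : k ≤ n / 2 := by omega
    exact hN.antitone hk (hOsub _ (huO n))
  have h3 := hp3 a u hu
  have h4 : Tendsto (fun k => p (u (2 * k + 1)) (u (2 * k))) atTop (𝓝 0) :=
    h3.comp (tendsto_atTop_atTop.mpr fun b => ⟨b, fun n hn => by omega⟩)
  have h5 : ∀ k, p (u (2 * k + 1)) (u (2 * k)) = p (y k) (z k) := by
    intro k
    have e1 : u (2 * k + 1) = y k := by
      simp only [hu_def]
      rw [if_neg (by omega)]
      congr 1
      omega
    have e2 : u (2 * k) = z k := by
      simp only [hu_def]
      rw [if_pos (by omega)]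
      congr 1
      omega
    rw [e1, e2]
  have h6 : Tendsto (fun k => p (y k) (z k)) atTop (𝓝 0) := by
    simpa only [h5] using h4
  obtain ⟨k, hk⟩ := (h6.eventually (eventually_lt_nhds hε)).exists
  exact absurd (hpz k) (not_le.mpr hk)

lemma pSup_le_of_forall {X : Type*} (p : X → X → ℝ) (C : Set X) (z : X) (ε : ℝ)
    (h : ∀ y ∈ C, p y z ≤ ε) : pSup p C z ≤ ENNReal.ofReal ε :=
  iSup₂_le fun y hy => ENNReal.ofReal_le_ofReal (h y hy)

/-- In a Hausdorff premetric space, every `τ`-contractive infinite `S`-orbit is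
p-contractive. -/
theorem pContractive_of_tauContractive
    {X : Type*} [TopologicalSpace X] [FirstCountableTopology X] [T2Space X]
    (p : X → X → ℝ) (hp : IsPremetric p)
    (S : X → Set X) (x : ℕ → X)
    (horbit : IsOrbit S x) (hcontr : IsTauContractive S x) :
    IsPContractive p S x := by
  obtain ⟨hp1, hp2, _, hp4⟩ := hp
  -- Main claim
  have claim : ∃ a : X, ∀ ε : ℝ, 0 < ε → ∀ N : Set X, IsOpen N → a ∈ N →
      ∃ i, x i ∈ N ∧ pSup p (S (x i)) (x i) ≤ ENNReal.ofReal ε := by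
    by_contra h
    push_neg at h
    choose ε hε N hNopen hNa hbad using h
    choose V hVopen hVa hVsmall using fun a => exists_open_small p hp4 a (ε a) (hε a)
    obtain ⟨U, hUγ, i₀, hxU, hSU⟩ := hcontr (Set.range (fun a => N a ∩ V a))
      (by rintro _ ⟨a, rfl⟩; exact (hNopen a).inter (hVopen a))
      (by
        ext w
        simp only [Set.mem_sUnion, Set.mem_range, Set.mem_univ, iff_true]
        exact ⟨N w ∩ V w, ⟨w, rfl⟩, hNa w, hVa w⟩)
    obtain ⟨a, rfl⟩ := hUγ
    have hle : pSup p (S (x i₀)) (x i₀) ≤ ENNReal.ofReal (ε a) :=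
      pSup_le_of_forall p _ _ _ fun y hy =>
        le_of_lt (hVsmall a y (hSU hy).2 (x i₀) hxU.2)
    exact absurd (hbad a i₀ hxU.1) (not_lt.mpr hle)
  obtain ⟨a, ha⟩ := claim
  obtain ⟨N, hN⟩ := (𝓝 a).exists_antitone_basis
  choose B hBsub hBopen hBa using fun k => mem_nhds_iff.mp (hN.mem k)
  have key : ∀ k : ℕ, ∃ i, x i ∈ B k ∧
      pSup p (S (x i)) (x i) ≤ ENNReal.ofReal (1 / (k + 1)) :=
    fun k => ha (1 / (k + 1)) (by positivity) (B k) (hBopen k) (hBa k)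
  choose I hIB hIp using key
  by_cases hb : ∀ m : ℕ, ∃ k, m < I k
  · -- unbounded case
    have step : ∀ j : ℕ, ∃ k, ((Finset.range (j + 1)).sup I) < I k := fun j => hb _
    let ψ : ℕ → ℕ := fun n => Nat.rec 0 (fun _ prev => Classical.choose (step prev)) n
    have hψ0 : ψ 0 = 0 := rfl
    have hψs : ∀ n, ψ (n + 1) = Classical.choose (step (ψ n)) := fun n => rfl
    have hψspec : ∀ n, (Finset.range (ψ n + 1)).sup I < I (ψ (n + 1)) := by
      intro n
      rw [hψs n]
      exact Classical.choose_spec (step (ψ n))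
    have hIψ : StrictMono (fun n => I (ψ n)) := by
      apply strictMono_nat_of_lt_succ
      intro n
      exact lt_of_le_of_lt (Finset.le_sup (Finset.self_mem_range_succ (ψ n))) (hψspec n)
    have hψmono : StrictMono ψ := by
      apply strictMono_nat_of_lt_succ
      intro n
      rcases lt_or_ge (ψ n) (ψ (n + 1)) with hlt | hle
      · exact hlt
      · exfalso
        have : I (ψ (n + 1)) ≤ (Finset.range (ψ n + 1)).sup I :=
          Finset.le_sup (Finset.mem_range.mpr (Nat.lt_succ_of_le hle))
        exact absurd (hψspec n) (not_lt.mpr this)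
    refine ⟨fun n => I (ψ n), hIψ, ⟨a, ?_⟩, ?_⟩
    · rw [hN.toHasBasis.tendsto_right_iff]
      intro k _
      filter_upwards [eventually_ge_atTop k] with n hn
      have : k ≤ ψ n := le_trans hn (hψmono.le_apply)
      exact hN.antitone this (hBsub _ (hIB (ψ n)))
    · have htop : Tendsto (fun n : ℕ => ENNReal.ofReal (1 / (n + 1))) atTop (𝓝 0) := by
        have := ENNReal.tendsto_ofReal tendsto_one_div_add_atTop_nhds_zero_nat
        simpa using this
      have hub : ∀ n : ℕ, pSup p (S (x (I (ψ n)))) (x (I (ψ n))) ≤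
          ENNReal.ofReal (1 / (n + 1)) := by
        intro n
        refine le_trans (hIp (ψ n)) (ENNReal.ofReal_le_ofReal ?_)
        refine one_div_le_one_div_of_le (by positivity) ?_
        have h0 : n ≤ ψ n := hψmono.le_apply
        exact_mod_cast Nat.succ_le_succ h0
      exact tendsto_of_tendsto_of_tendsto_of_le_of_le tendsto_const_nhds htop
        (fun n => zero_le) hub
  · -- bounded case: orbit tail is constant
    push_neg at hb
    obtain ⟨m, hm⟩ := hb
    have : ∃ b : Fin (m + 1), ((fun k => (⟨I k, Nat.lt_succ_of_le (hm k)⟩ : Fin (m + 1))) ⁻¹'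
        {b}).Infinite := by
      obtain ⟨b, hbinf⟩ := Finite.exists_infinite_fiber
        (fun k => (⟨I k, Nat.lt_succ_of_le (hm k)⟩ : Fin (m + 1)))
      exact ⟨b, Set.infinite_coe_iff.mp hbinf⟩
    obtain ⟨b, hbinf⟩ := this
    set i := (b : ℕ) with hi
    have hfib : ∀ K : ℕ, ∃ k, K < k ∧ I k = i := by
      intro K
      obtain ⟨k, hk1, hk2⟩ := hbinf.exists_gt K
      refine ⟨k, hk2, ?_⟩
      have : (⟨I k, Nat.lt_succ_of_le (hm k)⟩ : Fin (m + 1)) = b := hk1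
      simpa [hi] using congrArg Fin.val this
    -- pSup at i is 0
    have hzero : pSup p (S (x i)) (x i) = 0 := by
      have hle : ∀ K : ℕ, pSup p (S (x i)) (x i) ≤ ENNReal.ofReal (1 / (K + 1)) := by
        intro K
        obtain ⟨k, hKk, hki⟩ := hfib K
        have h0 : (K : ℝ) + 1 ≤ (k : ℝ) + 1 := by
          exact_mod_cast Nat.succ_le_succ (le_of_lt hKk)
        refine le_trans ?_ (ENNReal.ofReal_le_ofReal
          (one_div_le_one_div_of_le (by positivity) h0))
        rw [← hki]
        exact hIp k
      have htend : Tendsto (fun K : ℕ => ENNReal.ofReal (1 / (K + 1))) atTop (𝓝 0) := by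
        have := ENNReal.tendsto_ofReal tendsto_one_div_add_atTop_nhds_zero_nat
        simpa using this
      have := ge_of_tendsto' htend hle
      exact le_antisymm this zero_le
    have hsingle : ∀ y ∈ S (x i), y = x i := by
      intro y hy
      have h1 : ENNReal.ofReal (p y (x i)) ≤ pSup p (S (x i)) (x i) := by
        exact le_iSup₂ (f := fun y _ => ENNReal.ofReal (p y (x i))) y hy
      rw [hzero] at h1
      have h2 : ENNReal.ofReal (p y (x i)) = 0 := le_antisymm h1 zero_le
      have h3 : p y (x i) ≤ 0 := ENNReal.ofReal_eq_zero.mp h2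
      have h4 : p y (x i) = 0 := le_antisymm h3 (hp1 y (x i))
      exact (hp2 y (x i)).mp h4
    have hconst : ∀ n, x (i + n) = x i := by
      intro n
      induction n with
      | zero => rfl
      | succ n ih =>
        have : x (i + n + 1) ∈ S (x (i + n)) := horbit (i + n)
        rw [ih] at this
        have := hsingle _ this
        simpa [Nat.add_assoc] using this
    refine ⟨fun n => i + n, fun u v huv => by simpa using Nat.add_lt_add_left huv i, ⟨x i, ?_⟩, ?_⟩
    · have : (x ∘ fun n => i + n) = fun _ => x i := by
        funext n
        exact hconst n
      rw [this]
      exact tendsto_const_nhds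
    · have : (fun k => pSup p (S (x (i + k))) (x (i + k))) = fun _ => (0 : ENNReal) := by
        funext k
        rw [hconst k, hzero]
      rw [this]
      exact tendsto_const_nhds
end

section
/- Let (X, τ, p) be a Hausdorff premetric space, let S : X → Set X be a set-valued map, and let M = (x_i)_{i≥1} be a p-contractive infinite S-orbit satisfying property (⋆̄₁). Then there exists an accumulation point x̄ of M (a limit of some subsequence of M) such that S(x̄) ⊆ {x̄}. -/
open Filter Topology Set

/-- Property `(⋆̄₁)`: for each subsequence converging to a point `a` and each
`y ∈ S a`, `y ≠ a`, there is a further subsequence all of whose terms `x (φ (ψ j))`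
satisfy `y ∈ S (x (φ (ψ j)))`. -/
def PropStarBar1 {X : Type*} [TopologicalSpace X] (S : X → Set X) (x : ℕ → X) : Prop :=
  ∀ φ : ℕ → ℕ, StrictMono φ → ∀ a : X, Tendsto (x ∘ φ) atTop (𝓝 a) →
    ∀ y ∈ S a, y ≠ a →
      ∃ ψ : ℕ → ℕ, StrictMono ψ ∧ ∀ j : ℕ, y ∈ S (x (φ (ψ j)))

/-- In a Hausdorff premetric space, a p-contractive infinite `S`-orbit satisfying
`(⋆̄₁)` has an accumulation point `xbar` with `S xbar ⊆ {xbar}`. -/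
theorem accPoint_strict_fixed_of_pContractive
    {X : Type*} [TopologicalSpace X] [FirstCountableTopology X] [T2Space X]
    (p : X → X → ℝ) (hp : IsPremetric p)
    (S : X → Set X) (x : ℕ → X)
    (horbit : IsOrbit S x) (hcontr : IsPContractive p S x) (hstar : PropStarBar1 S x) :
    ∃ xbar : X, (∃ φ : ℕ → ℕ, StrictMono φ ∧ Tendsto (x ∘ φ) atTop (𝓝 xbar)) ∧
      S xbar ⊆ {xbar} := by
  obtain ⟨φ, hφ, ⟨a, ha⟩, hps⟩ := hcontr
  refine ⟨a, ⟨φ, hφ, ha⟩, ?_⟩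
  intro y hy
  by_contra hne
  simp only [mem_singleton_iff] at hne
  obtain ⟨ψ, hψ, hyS⟩ := hstar φ hφ a ha y hy hne
  -- the ENNReal sup tends to 0 along the further subsequence
  have hps' : Tendsto (fun j => pSup p (S (x (φ (ψ j)))) (x (φ (ψ j)))) atTop (𝓝 0) :=
    hps.comp hψ.tendsto_atTop
  have hg : Tendsto (fun j => ENNReal.ofReal (p y (x (φ (ψ j))))) atTop (𝓝 0) := by
    rw [ENNReal.tendsto_nhds_zero]
    intro ε hε
    filter_upwards [(ENNReal.tendsto_nhds_zero.mp hps') ε hε] with j hj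
    exact le_trans (le_biSup (fun z => ENNReal.ofReal (p z (x (φ (ψ j))))) (hyS j)) hj
  have hreal : Tendsto (fun j => p y (x (φ (ψ j)))) atTop (𝓝 0) := by
    have := (ENNReal.tendsto_toReal (by simp)).comp hg
    simpa [Function.comp_def, ENNReal.toReal_ofReal (hp.1 y _)] using this
  have hconv : Tendsto (fun j => x (φ (ψ j))) atTop (𝓝 y) := hp.2.2.1 y _ hreal
  have hconv' : Tendsto (fun j => x (φ (ψ j))) atTop (𝓝 a) := ha.comp hψ.tendsto_atTop
  exact hne (tendsto_nhds_unique hconv hconv')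
end

section
/- Let (X, τ, p) be a premetric space. Suppose that for every set-valued map S : X → Set X and every p-contractive infinite S-orbit M = (x_i)_{i≥1} satisfying property (⋆̄₁), there exists an accumulation point x̄ of M (a limit of some subsequence of M) such that S(x̄) ⊆ {x̄}. Then (X, τ) is Hausdorff. -/
open Filter Topology Set

namespace PremetricAuxT2

variable {X : Type*} [TopologicalSpace X]

/-- Interleaving lemma: if `v → z` then `p z (v n) → 0`. -/
theorem tendsto_p_of_tendsto (p : X → X → ℝ) (hp : IsPremetric p) {z : X} {v : ℕ → X}
    (hv : Tendsto v atTop (𝓝 z)) : Tendsto (fun n => p z (v n)) atTop (𝓝 0) := by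
  set w : ℕ → X := fun n => if n % 2 = 0 then z else v (n / 2) with hw
  have hwz : Tendsto w atTop (𝓝 z) := by
    rw [Filter.tendsto_def]
    intro s hs
    have hzs : z ∈ s := mem_of_mem_nhds hs
    have h2 := Filter.tendsto_def.mp hv s hs
    rw [Filter.mem_atTop_sets] at h2 ⊢
    obtain ⟨N, hN⟩ := h2
    refine ⟨2 * N, fun n hn => ?_⟩
    simp only [Set.mem_preimage, hw]
    by_cases h2 : n % 2 = 0
    · simp [h2, hzs]
    · rw [if_neg h2]
      exact hN _ (by omega)
  have h4 := hp.2.2.2 z w hwz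
  have hmono : Tendsto (fun m : ℕ => 2 * m + 1) atTop atTop :=
    tendsto_atTop_mono (fun n => by simp only [id_eq]; omega) tendsto_id
  have hcomp := h4.comp hmono
  have heq : ((fun n => p (w (n + 1)) (w n)) ∘ fun m : ℕ => 2 * m + 1)
      = fun m => p z (v m) := by
    funext m
    have h1 : (2 * m + 1 + 1) % 2 = 0 := by omega
    have h2 : (2 * m + 1) % 2 = 1 := by omega
    have h3 : (2 * m + 1) / 2 = m := by omega
    simp only [Function.comp, hw, h1, h2, h3]
    norm_num
  rwa [heq] at hcomp

/-- If `z` belongs to every neighbourhood of `a`, then `z = a`. -/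
theorem eq_of_mem_all_nhds (p : X → X → ℝ) (hp : IsPremetric p) {a z : X}
    (hz : ∀ W ∈ 𝓝 a, z ∈ W) : z = a := by
  have hconst : Tendsto (fun _ : ℕ => z) atTop (𝓝 a) := by
    rw [Filter.tendsto_def]
    intro s hs
    have : (fun _ : ℕ => z) ⁻¹' s = Set.univ := by
      ext n; simp [hz s hs]
    rw [this]; exact univ_mem
  have h0 := tendsto_p_of_tendsto p hp hconst
  have : p a z = 0 := tendsto_nhds_unique tendsto_const_nhds h0
  exact ((hp.2.1 a z).mp this).symm

def ddSet (F : ℕ → Set X) : Set X := {z | ∀ j : ℕ, ∀ W ∈ 𝓝 z, (W ∩ F j).Nonempty}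

def pickP (s : (ℕ → Set X) × List X) (z : X) : Prop :=
  z ∈ ddSet s.1 ∧ z ∉ s.2 ∧ ∃ m, s.2.length ≤ m ∧ z ∈ s.1 m

open Classical in
noncomputable def towStep (B : X → ℕ → Set X) (s : (ℕ → Set X) × List X) :
    (ℕ → Set X) × List X :=
  if h : ∃ z, pickP s z then (fun j => s.1 j ∩ B h.choose j, h.choose :: s.2) else s

noncomputable def tower (B : X → ℕ → Set X) (F0 : ℕ → Set X) : ℕ → (ℕ → Set X) × List X :=
  fun k => (towStep B)^[k] (F0, [])

theorem tower_zero (B : X → ℕ → Set X) (F0 : ℕ → Set X) : tower B F0 0 = (F0, []) := rfl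

theorem tower_succ (B : X → ℕ → Set X) (F0 : ℕ → Set X) (k : ℕ) :
    tower B F0 (k + 1) = towStep B (tower B F0 k) :=
  Function.iterate_succ_apply' _ _ _

def buildSeq (step : List ℕ → ℕ) : ℕ → List ℕ
  | 0 => []
  | t + 1 => step (buildSeq step t) :: buildSeq step t

theorem buildSeq_succ (step : List ℕ → ℕ) (t : ℕ) :
    buildSeq step (t + 1) = step (buildSeq step t) :: buildSeq step t := rfl

/-- A nested antitone family of nonempty sets which is eventually contained in (the set of
elements of) a finite list has a common element. -/
theorem exists_mem_all {F : ℕ → Set X} (hanti : Antitone F) (hne : ∀ j, (F j).Nonempty)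
    {L : List X} {M : ℕ} (hL : ∀ m, M ≤ m → ∀ z ∈ F m, z ∈ L) : ∃ z, ∀ j, z ∈ F j := by
  set G : ℕ → Set X := fun m => F (M + m) with hG
  have hGfin : ∀ m, (G m).Finite := fun m =>
    L.finite_toSet.subset (fun z hz => hL (M + m) (by omega) z hz)
  have hGanti : Antitone G := fun m m' hmm' => hanti (by omega)
  have hGne : ∀ m, (G m).Nonempty := fun m => hne _
  set Scard : Set ℕ := {n | ∃ m, (G m).ncard = n} with hScard
  have hSne : Scard.Nonempty := ⟨(G 0).ncard, 0, rfl⟩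
  obtain ⟨m₀, hm₀⟩ : ∃ m, (G m).ncard = sInf Scard := Nat.sInf_mem hSne
  have heq : ∀ m, m₀ ≤ m → G m = G m₀ := by
    intro m hm
    by_contra hne'
    have hss : G m ⊂ G m₀ := Set.ssubset_iff_subset_ne.mpr ⟨hGanti hm, hne'⟩
    have hlt := Set.ncard_lt_ncard hss (hGfin m₀)
    have hmem : (G m).ncard ∈ Scard := ⟨m, rfl⟩
    have := Nat.sInf_le hmem
    omega
  obtain ⟨z, hz⟩ := hGne m₀
  refine ⟨z, fun j => ?_⟩
  have h1 : z ∈ G (max m₀ j) := (heq _ (le_max_left _ _)) ▸ hz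
  exact hanti (by omega : j ≤ M + max m₀ j) h1

theorem pSup_le_ofReal {p : X → X → ℝ} {C : Set X} {x : X} {M : ℝ}
    (h : ∀ y ∈ C, p y x ≤ M) : pSup p C x ≤ ENNReal.ofReal M :=
  iSup₂_le fun y hy => ENNReal.ofReal_le_ofReal (h y hy)

theorem tendsto_pSup_zero {p : X → X → ℝ} (C : ℕ → Set X) (x : ℕ → X) (Bnd : ℕ → ℝ)
    (hB : Tendsto Bnd atTop (𝓝 0)) (hbd : ∀ i, ∀ y ∈ C i, p y (x i) ≤ Bnd i) :
    Tendsto (fun i => pSup p (C i) (x i)) atTop (𝓝 0) := by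
  have h1 : Tendsto (fun i => ENNReal.ofReal (Bnd i)) atTop (𝓝 0) := by
    simpa using ENNReal.tendsto_ofReal hB
  exact tendsto_of_tendsto_of_tendsto_of_le_of_le tendsto_const_nhds h1
    (fun i => zero_le) (fun i => pSup_le_ofReal (hbd i))

/-- The common final step: from a suitable orbit we contradict `a ≠ b`. -/
theorem keyContra {X : Type*} [TopologicalSpace X]
    (p : X → X → ℝ)
    (h : ∀ (S : X → Set X) (x : ℕ → X), IsOrbit S x → IsPContractive p S x →
      PropStarBar1 S x →
      ∃ xbar : X, (∃ φ : ℕ → ℕ, StrictMono φ ∧ Tendsto (x ∘ φ) atTop (𝓝 xbar)) ∧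
        S xbar ⊆ {xbar})
    {a b : X} (hab : a ≠ b) (x : ℕ → X) (Extra : X → Set X)
    (horb : ∀ i, x (i + 1) ∈ ({a, b} : Set X) ∪ Extra (x i))
    (hconv : Tendsto x atTop (𝓝 a))
    (hpsup : Tendsto (fun i => pSup p (({a, b} : Set X) ∪ Extra (x i)) (x i)) atTop (𝓝 0))
    (hstar : ∀ φ : ℕ → ℕ, StrictMono φ → ∀ d : X, Tendsto (x ∘ φ) atTop (𝓝 d) →
      ∀ y ∈ Extra d, y ≠ d → ∃ ψ : ℕ → ℕ, StrictMono ψ ∧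
        ∀ j, y ∈ ({a, b} : Set X) ∪ Extra (x (φ (ψ j)))) : False := by
  obtain ⟨xbar, -, hsub⟩ :=
    h (fun z => ({a, b} : Set X) ∪ Extra z) x horb
      ⟨id, strictMono_id, ⟨a, by simpa [Function.comp_id] using hconv⟩, hpsup⟩
      (by
        intro φ hφ d hd y hy hyne
        rcases hy with hy | hy
        · exact ⟨id, strictMono_id, fun j => Set.mem_union_left _ hy⟩
        · exact hstar φ hφ d hd y hy hyne)
  have ha : a = xbar := hsub (Set.mem_union_left _ (Set.mem_insert _ _))
  have hb : b = xbar := hsub (Set.mem_union_left _ (Set.mem_insert_of_mem _ rfl))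
  exact hab (ha.trans hb.symm)

end PremetricAuxT2
open PremetricAuxT2 in
/-- If in a premetric space, every p-contractive infinite `S`-orbit satisfying
`(⋆̄₁)` (for every set-valued map `S`) has an accumulation point `xbar` with
`S xbar ⊆ {xbar}`, then the space is Hausdorff. -/
theorem t2Space_of_pContractive_fixed_point_property
    {X : Type*} [TopologicalSpace X] [FirstCountableTopology X]
    (p : X → X → ℝ) (hp : IsPremetric p)
    (h : ∀ (S : X → Set X) (x : ℕ → X), IsOrbit S x → IsPContractive p S x →
      PropStarBar1 S x →
      ∃ xbar : X, (∃ φ : ℕ → ℕ, StrictMono φ ∧ Tendsto (x ∘ φ) atTop (𝓝 xbar)) ∧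
        S xbar ⊆ {xbar}) :
    T2Space X := by
  classical
  obtain ⟨B, hB⟩ : ∃ B : X → ℕ → Set X, ∀ z, (𝓝 z).HasAntitoneBasis (B z) :=
    ⟨fun z => (Filter.exists_antitone_basis (𝓝 z)).choose,
      fun z => (Filter.exists_antitone_basis (𝓝 z)).choose_spec⟩
  have hBmem : ∀ z j, B z j ∈ 𝓝 z := fun z j => (hB z).toHasBasis.mem_of_mem trivial
  have hBanti : ∀ z : X, Antitone (B z) := fun z => (hB z).antitone
  have hBsub : ∀ z : X, ∀ W ∈ 𝓝 z, ∃ j, B z j ⊆ W := by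
    intro z W hW
    obtain ⟨j, -, hj⟩ := (hB z).toHasBasis.mem_iff.mp hW
    exact ⟨j, hj⟩
  have key : ∀ a b : X, (∀ j, (B a j ∩ B b j).Nonempty) → a = b := by
    intro a b hUV
    by_contra hab
    set F0 : ℕ → Set X := fun j => B a j ∩ B b j with hF0
    -- basic facts about the tower
    have hinv : ∀ k, Antitone (tower B F0 k).1 ∧ (∀ j, ((tower B F0 k).1 j).Nonempty) ∧
        (∀ j, (tower B F0 k).1 j ⊆ F0 j) := by
      intro k
      induction k with
      | zero =>
          refine ⟨?_, fun j => hUV j, fun j => subset_rfl⟩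
          intro i j hij
          exact Set.inter_subset_inter (hBanti a hij) (hBanti b hij)
      | succ k ih =>
          rw [tower_succ]
          unfold towStep
          by_cases hpk : ∃ z, pickP (tower B F0 k) z
          · rw [dif_pos hpk]
            obtain ⟨ih1, ih2, ih3⟩ := ih
            refine ⟨?_, ?_, ?_⟩
            · intro i j hij
              exact Set.inter_subset_inter (ih1 hij) (hBanti _ hij)
            · intro j
              have hne := hpk.choose_spec.1 j (B hpk.choose j) (hBmem _ j)
              exact hne.imp fun w hw => ⟨hw.2, hw.1⟩
            · intro j
              exact Set.inter_subset_left.trans (ih3 j)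
          · rw [dif_neg hpk]; exact ih
    by_cases hG : ∃ k, ¬ ∃ j₀, ∀ j, j₀ ≤ j → (tower B F0 k).1 j ⊆ ddSet (tower B F0 k).1
    · -- the "good" case: a level with many non-adherent points
      obtain ⟨k₀, hk₀⟩ := hG
      obtain ⟨hFanti, hFne, hFsub⟩ := hinv k₀
      set F : ℕ → Set X := (tower B F0 k₀).1 with hFdef
      push_neg at hk₀
      have hescE : ∀ z, z ∉ ddSet F → ∃ Wl : Set X × ℕ, Wl.1 ∈ 𝓝 z ∧ Wl.1 ∩ F Wl.2 = ∅ := by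
        intro z hz
        unfold ddSet at hz
        simp only [Set.mem_setOf_eq] at hz
        push_neg at hz
        obtain ⟨j, W, hW, hne'⟩ := hz
        exact ⟨(W, j), hW, hne'⟩
      choose! esc hesc1 hesc2 using hescE
      have hstep2 : ∀ s : ℕ × ℕ, ∃ jz : ℕ × X,
          (s.1 < jz.1 ∧ s.2 < jz.1) ∧ jz.2 ∈ F jz.1 ∧ jz.2 ∉ ddSet F := by
        intro s
        obtain ⟨j, hj1, hj2⟩ := hk₀ (max s.1 s.2 + 1)
        obtain ⟨z, hz1, hz2⟩ := Set.not_subset.mp hj2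
        exact ⟨(j, z), ⟨by omega, by omega⟩, hz1, hz2⟩
      choose g hg using hstep2
      set f : ℕ × ℕ → ℕ × ℕ := fun s => ((g s).1, max s.2 ((esc (g s).2).2 + 1)) with hfdef
      set st : ℕ → ℕ × ℕ := fun t => f^[t] (0, 0) with hstdef
      set w : ℕ → X := fun t => (g (st t)).2 with hwdef
      set jt : ℕ → ℕ := fun t => (g (st t)).1 with hjtdef
      have hstep : ∀ t, st (t + 1) = (jt t, max (st t).2 ((esc (w t)).2 + 1)) := by
        intro t
        show f^[t + 1] (0, 0) = _
        rw [Function.iterate_succ_apply']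
      have hgs : ∀ t, ((st t).1 < jt t ∧ (st t).2 < jt t) ∧ w t ∈ F (jt t) ∧ w t ∉ ddSet F :=
        fun t => hg (st t)
      have hjmono : StrictMono jt := by
        refine strictMono_nat_of_lt_succ fun t => ?_
        have h1 := (hgs (t + 1)).1.1
        rw [hstep t] at h1
        exact h1
      have hm2 : Monotone fun t => (st t).2 := by
        refine monotone_nat_of_le_succ fun t => ?_
        show (st t).2 ≤ (st (t + 1)).2
        rw [hstep t]
        exact le_max_left _ _
      have hjle : ∀ t, t ≤ jt t := fun t => hjmono.id_le t
      have hesclt : ∀ s t, s < t → (esc (w s)).2 < jt t := by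
        intro s t hst'
        have h1 : (esc (w s)).2 + 1 ≤ (st (s + 1)).2 := by
          rw [hstep s]; exact le_max_right _ _
        have h2 : (st (s + 1)).2 ≤ (st t).2 := hm2 hst'
        have h3 := (hgs t).1.2
        omega
      have havoid : ∀ s t, s < t → w t ∉ (esc (w s)).1 := by
        intro s t hst' hmem
        have hsubF : F (jt t) ⊆ F ((esc (w s)).2) := hFanti (le_of_lt (hesclt s t hst'))
        have hin : w t ∈ (esc (w s)).1 ∩ F ((esc (w s)).2) := ⟨hmem, hsubF (hgs t).2.1⟩
        rw [hesc2 _ (hgs s).2.2] at hin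
        exact hin
      have hwinj2 : ∀ s t, w s = w t → s = t := by
        intro s t heq
        rcases lt_trichotomy s t with h' | h' | h'
        · exact absurd (heq ▸ mem_of_mem_nhds (hesc1 _ (hgs s).2.2)) (havoid s t h')
        · exact h'
        · exact absurd (heq.symm ▸ mem_of_mem_nhds (hesc1 _ (hgs t).2.2)) (havoid t s h')
      have hwB : ∀ t l, l ≤ t → w t ∈ F0 l := by
        intro t l hlt
        have h1 : w t ∈ F0 (jt t) := hFsub _ (hgs t).2.1
        exact ⟨hBanti a (le_trans hlt (hjle t)) h1.1, hBanti b (le_trans hlt (hjle t)) h1.2⟩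
      have hwa : Tendsto w atTop (𝓝 a) := by
        rw [(hB a).toHasBasis.tendsto_right_iff]
        intro l _
        filter_upwards [eventually_ge_atTop l] with t ht
        exact (hwB t l ht).1
      have hwb : Tendsto w atTop (𝓝 b) := by
        rw [(hB b).toHasBasis.tendsto_right_iff]
        intro l _
        filter_upwards [eventually_ge_atTop l] with t ht
        exact (hwB t l ht).2
      have hpa : Tendsto (fun i => p a (w i)) atTop (𝓝 0) := tendsto_p_of_tendsto p hp hwa
      have hpb : Tendsto (fun i => p b (w i)) atTop (𝓝 0) := tendsto_p_of_tendsto p hp hwb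
      have hps : Tendsto (fun i => p (w (i + 1)) (w i)) atTop (𝓝 0) := hp.2.2.2 a w hwa
      refine keyContra p h hab w (fun z => {y | ∃ t, w t = z ∧ y = w (t + 1)}) ?_ hwa ?_ ?_
      · intro i
        exact Set.mem_union_right _ ⟨i, rfl, rfl⟩
      · refine tendsto_pSup_zero _ _
          (fun i => max (max (p a (w i)) (p b (w i))) (p (w (i + 1)) (w i))) ?_ ?_
        · simpa using (hpa.max hpb).max hps
        · intro i y hy
          rcases hy with hy | hy
          · rcases Set.mem_insert_iff.mp hy with hy' | hy'
            · subst hy'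
              exact le_trans (le_max_left _ _) (le_max_left _ _)
            · rw [Set.mem_singleton_iff] at hy'
              subst hy'
              exact le_trans (le_max_right _ _) (le_max_left _ _)
          · obtain ⟨t, ht, rfl⟩ := hy
            have htt : t = i := hwinj2 t i ht
            subst htt
            exact le_max_right _ _
      · intro φ hφ d hd y hy hyne
        exfalso
        obtain ⟨t, hwt, rfl⟩ := hy
        have hWn : (esc (w t)).1 ∈ 𝓝 d := hwt ▸ hesc1 _ (hgs t).2.2
        have hev : ∀ᶠ j in atTop, (w ∘ φ) j ∈ (esc (w t)).1 :=
          hd.eventually (eventually_mem_set.mpr hWn)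
        obtain ⟨j, hj1, hj2⟩ := (hev.and (eventually_gt_atTop t)).exists
        have hphi : t < φ j := lt_of_lt_of_le hj2 (hφ.id_le j)
        exact havoid t (φ j) hphi hj1
    · -- the "bad" case: every level is eventually adherent
      push_neg at hG
      have hsucc : ∀ k, ∃ z, pickP (tower B F0 k) z := by
        intro k
        obtain ⟨j₀, hj₀⟩ := hG k
        obtain ⟨hanti, hne, hsub⟩ := hinv k
        by_contra hnoz
        push_neg at hnoz
        have hall : ∀ m, max j₀ (tower B F0 k).2.length ≤ m →
            ∀ z ∈ (tower B F0 k).1 m, z ∈ (tower B F0 k).2 := by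
          intro m hm z hzm
          by_contra hzL
          exact hnoz z ⟨hj₀ m (le_trans (le_max_left _ _) hm) hzm, hzL, m,
            le_trans (le_max_right _ _) hm, hzm⟩
        obtain ⟨z, hz⟩ := exists_mem_all hanti hne hall
        have hza : z = a := eq_of_mem_all_nhds p hp (fun W hW => by
          obtain ⟨l, hl⟩ := hBsub a W hW
          exact hl ((hsub l (hz l)).1))
        have hzb : z = b := eq_of_mem_all_nhds p hp (fun W hW => by
          obtain ⟨l, hl⟩ := hBsub b W hW
          exact hl ((hsub l (hz l)).2))
        exact hab (hza.symm.trans hzb)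
      set c : ℕ → X := fun k => (hsucc k).choose with hcdef
      have hcspec : ∀ k, pickP (tower B F0 k) (c k) := fun k => (hsucc k).choose_spec
      have htow : ∀ k, tower B F0 (k + 1) =
          (fun j => (tower B F0 k).1 j ∩ B (c k) j, c k :: (tower B F0 k).2) := by
        intro k
        rw [tower_succ]
        unfold towStep
        rw [dif_pos (hsucc k)]
      have hlen : ∀ k, (tower B F0 k).2.length = k := by
        intro k
        induction k with
        | zero => rfl
        | succ k ih => rw [htow k]; simp [ih]
      have hmemL : ∀ i k, i < k → c i ∈ (tower B F0 k).2 := by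
        intro i k
        induction k with
        | zero => omega
        | succ k ih =>
            intro hik
            rw [htow k]
            rcases Nat.lt_succ_iff_lt_or_eq.mp hik with h' | h'
            · exact List.mem_cons_of_mem _ (ih h')
            · subst h'; exact List.mem_cons_self
      have hcne : ∀ i k, i < k → c i ≠ c k := fun i k hik heq =>
        (hcspec k).2.1 (heq ▸ hmemL i k hik)
      have hcinj : Function.Injective c := by
        intro i k hik
        rcases lt_trichotomy i k with h' | h' | h'
        · exact absurd hik (hcne i k h')
        · exact h'
        · exact absurd hik.symm (hcne k i h')
      have hTsub : ∀ i k, i < k → ∀ j, (tower B F0 k).1 j ⊆ B (c i) j := by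
        intro i k
        induction k with
        | zero => omega
        | succ k ih =>
            intro hik j
            rw [htow k]
            rcases Nat.lt_succ_iff_lt_or_eq.mp hik with h' | h'
            · exact Set.inter_subset_left.trans (ih h' j)
            · subst h'; exact Set.inter_subset_right
      have hcm : ∀ k, ∃ m, k ≤ m ∧ c k ∈ (tower B F0 k).1 m := by
        intro k
        obtain ⟨m, hm1, hm2⟩ := (hcspec k).2.2
        exact ⟨m, (hlen k) ▸ hm1, hm2⟩
      have hcBa : ∀ k l, l ≤ k → c k ∈ B a l := by
        intro k l hlk
        obtain ⟨m, hm1, hm2⟩ := hcm k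
        exact hBanti a (le_trans hlk hm1) (((hinv k).2.2 m) hm2).1
      have hcBb : ∀ k l, l ≤ k → c k ∈ B b l := by
        intro k l hlk
        obtain ⟨m, hm1, hm2⟩ := hcm k
        exact hBanti b (le_trans hlk hm1) (((hinv k).2.2 m) hm2).2
      have hcBc : ∀ i k l, i < k → l ≤ k → c k ∈ B (c i) l := by
        intro i k l hik hlk
        obtain ⟨m, hm1, hm2⟩ := hcm k
        exact hBanti (c i) (le_trans hlk hm1) (hTsub i k hik m hm2)
      have hca : Tendsto c atTop (𝓝 a) := by
        rw [(hB a).toHasBasis.tendsto_right_iff]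
        intro l _
        filter_upwards [eventually_ge_atTop l] with k hk
        exact hcBa k l hk
      have hcb : Tendsto c atTop (𝓝 b) := by
        rw [(hB b).toHasBasis.tendsto_right_iff]
        intro l _
        filter_upwards [eventually_ge_atTop l] with k hk
        exact hcBb k l hk
      have hcc : ∀ i, Tendsto c atTop (𝓝 (c i)) := by
        intro i
        rw [(hB (c i)).toHasBasis.tendsto_right_iff]
        intro l _
        filter_upwards [eventually_ge_atTop (max l (i + 1))] with k hk
        exact hcBc i k l (by omega) (by omega)
      have hpcc : ∀ i, Tendsto (fun m => p (c i) (c m)) atTop (𝓝 0) :=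
        fun i => tendsto_p_of_tendsto p hp (hcc i)
      have hstepex : ∀ l : List ℕ, ∃ N, (∀ i ∈ l, i < N) ∧
          (∀ i ∈ l, p (c i) (c N) < (1/2 : ℝ) ^ l.length) := by
        intro l
        have h1 : ∀ᶠ N in atTop, ∀ i ∈ l, i < N := by
          induction l with
          | nil => exact Filter.Eventually.of_forall (by simp)
          | cons hd tl ih =>
              filter_upwards [eventually_gt_atTop hd, ih] with N hN1 hN2
              intro i hi
              rcases List.mem_cons.mp hi with rfl | hi
              · exact hN1
              · exact hN2 i hi
        have h2 : ∀ ε : ℝ, 0 < ε → ∀ᶠ N in atTop, ∀ i ∈ l, p (c i) (c N) < ε := by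
          clear h1
          intro ε hε
          induction l with
          | nil => exact Filter.Eventually.of_forall (by simp)
          | cons hd tl ih =>
              filter_upwards [(hpcc hd).eventually_lt_const hε, ih] with N hN1 hN2
              intro i hi
              rcases List.mem_cons.mp hi with rfl | hi
              · exact hN1
              · exact hN2 i hi
        obtain ⟨N, hN1, hN2⟩ := (h1.and (h2 ((1/2 : ℝ) ^ l.length) (by positivity))).exists
        exact ⟨N, hN1, hN2⟩
      choose stepf hstepf1 hstepf2 using hstepex
      set n : ℕ → ℕ := fun t => stepf (buildSeq stepf t) with hn
      have hbs : ∀ t k, k < t → n k ∈ buildSeq stepf t := by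
        intro t
        induction t with
        | zero => omega
        | succ t ih =>
            intro k hk
            rw [buildSeq_succ]
            rcases Nat.lt_succ_iff_lt_or_eq.mp hk with h' | h'
            · exact List.mem_cons_of_mem _ (ih k h')
            · subst h'; exact List.mem_cons_self
      have hlenbs : ∀ t, (buildSeq stepf t).length = t := by
        intro t
        induction t with
        | zero => rfl
        | succ t ih => rw [buildSeq_succ]; simp [ih]
      have hnmono : StrictMono n :=
        strictMono_nat_of_lt_succ fun t =>
          hstepf1 (buildSeq stepf (t + 1)) (n t) (hbs (t + 1) t (by omega))
      have hnb : ∀ t k, k < t → p (c (n k)) (c (n t)) < (1/2 : ℝ) ^ t := by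
        intro t k hk
        have := hstepf2 (buildSeq stepf t) (n k) (hbs t k hk)
        rwa [hlenbs t] at this
      set x : ℕ → X := fun t => c (n t) with hx
      have hxinj : Function.Injective x := fun s t hst => hnmono.injective (hcinj hst)
      have hxa : Tendsto x atTop (𝓝 a) := hca.comp hnmono.tendsto_atTop
      have hxb : Tendsto x atTop (𝓝 b) := hcb.comp hnmono.tendsto_atTop
      have hpa : Tendsto (fun i => p a (x i)) atTop (𝓝 0) := tendsto_p_of_tendsto p hp hxa
      have hpb : Tendsto (fun i => p b (x i)) atTop (𝓝 0) := tendsto_p_of_tendsto p hp hxb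
      have hps : Tendsto (fun i => p (x (i + 1)) (x i)) atTop (𝓝 0) := hp.2.2.2 a x hxa
      have hpow : Tendsto (fun i => (1/2 : ℝ) ^ i) atTop (𝓝 0) :=
        tendsto_pow_atTop_nhds_zero_of_lt_one (by norm_num) (by norm_num)
      refine keyContra p h hab x
        (fun z => {y | ∃ i, x i = z ∧ ∃ k, k ≤ i + 1 ∧ y = x k}) ?_ hxa ?_ ?_
      · intro i
        exact Set.mem_union_right _ ⟨i, rfl, i + 1, le_rfl, rfl⟩
      · refine tendsto_pSup_zero _ _
          (fun i => max (max (p a (x i)) (p b (x i))) (max ((1/2 : ℝ) ^ i) (p (x (i + 1)) (x i))))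
          ?_ ?_
        · have := (hpa.max hpb).max (hpow.max hps)
          simpa using this
        · intro i y hy
          rcases hy with hy | hy
          · rcases Set.mem_insert_iff.mp hy with hy' | hy'
            · subst hy'
              exact le_trans (le_max_left _ _) (le_max_left _ _)
            · rw [Set.mem_singleton_iff] at hy'
              subst hy'
              exact le_trans (le_max_right _ _) (le_max_left _ _)
          · obtain ⟨i', hi', k, hk, rfl⟩ := hy
            have hii : i' = i := hxinj hi'
            subst hii
            rcases show k < i' ∨ k = i' ∨ k = i' + 1 by omega with h' | h' | h'
            · exact le_trans (le_of_lt (hnb i' k h'))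
                (le_trans (le_max_left _ _) (le_max_right _ _))
            · subst h'
              have h0 : p (x k) (x k) = 0 := (hp.2.1 _ _).mpr rfl
              rw [h0]
              exact le_trans (le_trans (by positivity) (le_max_left ((1/2 : ℝ) ^ k) _))
                (le_max_right _ _)
            · subst h'
              exact le_trans (le_max_right _ _) (le_max_right _ _)
      · intro φ hφ d hd y hy hyne
        obtain ⟨i, hxi, k, hk, rfl⟩ := hy
        refine ⟨fun j => j + k, fun s t hst => Nat.add_lt_add_right hst k, fun j => ?_⟩
        refine Set.mem_union_right _ ⟨φ (j + k), rfl, k, ?_, rfl⟩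
        have h1 : j + k ≤ φ (j + k) := hφ.le_apply
        omega
  refine ⟨fun x y hxy => ?_⟩
  by_contra hcon
  refine hxy (key x y fun j => ?_)
  obtain ⟨o, ho1, ho2, ho3⟩ := mem_nhds_iff.mp (hBmem x j)
  obtain ⟨o', ho1', ho2', ho3'⟩ := mem_nhds_iff.mp (hBmem y j)
  have hnd : ¬ Disjoint o o' := fun hd => hcon ⟨o, o', ho2, ho2', ho3, ho3', hd⟩
  obtain ⟨t, ht1, ht2⟩ := Set.not_disjoint_iff_nonempty_inter.mp hnd
  exact ⟨t, ho1 ht1, ho1' ht2⟩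
end

section
/- Let (X, τ, p) be a Hausdorff premetric space and let f : X → ℝ ∪ {+∞} be a proper function that is lower semicontinuous from above. Define S_f(x) := {y ∈ X : f(y) < f(x)}. If there exists a p-contractive infinite S_f-orbit, then f attains its minimum on X. -/
open Filter Topology Set

/-- In a Hausdorff premetric space, if `f : X → ℝ ∪ {+∞}` is proper and lower
semicontinuous from above and there exists a p-contractive infinite orbit of
`S_f x := {y : f y < f x}`, then `f` attains its minimum. -/
theorem attains_minimum_of_pContractive_orbit
    {X : Type*} [TopologicalSpace X] [FirstCountableTopology X] [T2Space X]
    (p : X → X → ℝ) (hp : IsPremetric p)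
    (f : X → EReal) (hreal : ∀ x : X, f x ≠ ⊥) (hproper : ∃ x : X, f x ≠ ⊤)
    (hlsc : LscFromAbove f)
    (x : ℕ → X) (horbit : IsOrbit (fun x => {y : X | f y < f x}) x)
    (hcontr : IsPContractive p (fun x => {y : X | f y < f x}) x) :
    ∃ xbar : X, ∀ z : X, f xbar ≤ f z := by

  obtain ⟨φ, hφ, ⟨a, ha⟩, hpc⟩ := hcontr
  have hanti : StrictAnti (fun i => f (x i)) := strictAnti_nat_of_succ_lt horbit
  -- values along shifted subsequence are < ⊤
  have htop : ∀ k : ℕ, f (x (φ (k + 1))) < ⊤ := by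
    intro k
    obtain ⟨m, hm⟩ := Nat.exists_eq_succ_of_ne_zero
      (Nat.one_le_iff_ne_zero.mp ((Nat.succ_le_of_lt (Nat.zero_lt_succ k)).trans (hφ.le_apply)))
    rw [hm]
    exact lt_of_lt_of_le (horbit m) le_top
  have hconv : Tendsto (fun k => x (φ (k + 1))) atTop (𝓝 a) :=
    ha.comp (tendsto_add_atTop_nat 1)
  have hant : Antitone (fun k : ℕ => f (x (φ (k + 1)))) := by
    apply antitone_nat_of_succ_le
    intro k
    exact (hanti (hφ (Nat.lt_succ_self (k + 1)))).le
  have hfa : ∀ k : ℕ, f a ≤ f (x (φ (k + 1))) :=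
    hlsc (fun k => x (φ (k + 1))) a htop hconv hant
  refine ⟨a, ?_⟩
  intro z
  by_contra hzlt
  push_neg at hzlt
  -- z belongs to every S(x(φ(k+1)))
  have hz : ∀ k : ℕ, f z < f (x (φ (k + 1))) := fun k => lt_of_lt_of_le hzlt (hfa k)
  have hpc' : Tendsto (fun k => pSup p {y : X | f y < f (x (φ (k + 1)))} (x (φ (k + 1))))
      atTop (𝓝 0) := hpc.comp (tendsto_add_atTop_nat 1)
  have hbound : ∀ k : ℕ, ENNReal.ofReal (p z (x (φ (k + 1)))) ≤
      pSup p {y : X | f y < f (x (φ (k + 1)))} (x (φ (k + 1))) := by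
    intro k
    exact le_iSup₂ (f := fun y (_ : y ∈ {y : X | f y < f (x (φ (k + 1)))}) =>
      ENNReal.ofReal (p y (x (φ (k + 1))))) z (hz k)
  have hsq : Tendsto (fun k => ENNReal.ofReal (p z (x (φ (k + 1))))) atTop (𝓝 0) :=
    tendsto_of_tendsto_of_tendsto_of_le_of_le tendsto_const_nhds hpc'
      (fun k => zero_le) hbound
  have hreal' : Tendsto (fun k => p z (x (φ (k + 1)))) atTop (𝓝 0) := by
    have := (ENNReal.tendsto_toReal (by simp)).comp hsq
    have heq : (ENNReal.toReal ∘ fun k => ENNReal.ofReal (p z (x (φ (k + 1))))) =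
        fun k => p z (x (φ (k + 1))) :=
      funext fun k => ENNReal.toReal_ofReal (hp.1 z _)
    simpa [heq] using this
  have hconvz : Tendsto (fun k => x (φ (k + 1))) atTop (𝓝 z) :=
    hp.2.2.1 z _ hreal'
  have : z = a := tendsto_nhds_unique hconvz hconv
  rw [this] at hzlt
  exact lt_irrefl _ hzlt
end

section
/- Let (X, τ, p) be a Hausdorff premetric space that is Σ_p-semicomplete and such that for each fixed y ∈ X the function x ↦ p(y, x) is continuous. Let f : X → ℝ ∪ {+∞} be a proper function that is lower semicontinuous from above and bounded below. Define the set-valued map S(x) := {y ∈ X : p(y, x) < f(x) − f(y)}. Then there exists x̄ ∈ X such that S(x̄) = ∅. -/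
open Filter Topology Set

/-- The space is `Σ_p`-semicomplete: every sequence of finite `p`-length has a
convergent subsequence. -/
def SigmaPSemicomplete {X : Type*} [TopologicalSpace X] (p : X → X → ℝ) : Prop :=
  ∀ u : ℕ → X, Summable (fun i => p (u (i + 1)) (u i)) →
    ∃ φ : ℕ → ℕ, StrictMono φ ∧ ∃ a : X, Tendsto (u ∘ φ) atTop (𝓝 a)

/-- In a Hausdorff, `Σ_p`-semicomplete premetric space where `p` is continuous in its
second argument, for every proper, lower semicontinuous from above and bounded below
function `f : X → ℝ ∪ {+∞}`, the map `S x := {y : p y x < f x - f y}` has an empty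
value at some point. -/
theorem exists_point_with_empty_value
    {X : Type*} [TopologicalSpace X] [FirstCountableTopology X] [T2Space X]
    (p : X → X → ℝ) (hp : IsPremetric p)
    (hcomplete : SigmaPSemicomplete p)
    (hcont : ∀ y : X, Continuous fun x : X => p y x)
    (f : X → EReal) (hreal : ∀ x : X, f x ≠ ⊥) (hproper : ∃ x : X, f x ≠ ⊤)
    (hlsc : LscFromAbove f)
    (hbdd : ∃ c : ℝ, ∀ x : X, (c : EReal) ≤ f x) :
    ∃ xbar : X, {y : X | ((p y xbar : ℝ) : EReal) < f xbar - f y} = ∅ := by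
  classical
  by_contra hcon
  push_neg at hcon
  have hS : ∀ x : X, ∃ y : X, ((p y x : ℝ) : EReal) < f x - f y := by
    intro x
    rcases hcon x with ⟨y, hy⟩
    exact ⟨y, hy⟩
  obtain ⟨c, hc⟩ := hbdd
  obtain ⟨x₀, hx₀⟩ := hproper
  set F : X → ℝ := fun x => (f x).toReal with hFdef
  -- members of S x have finite value
  have htop : ∀ x y : X, ((p y x : ℝ) : EReal) < f x - f y → f y ≠ ⊤ := by
    intro x y hxy hy
    rw [hy, EReal.sub_top] at hxy
    exact absurd hxy not_lt_bot
  have hlt_real : ∀ x y : X, f x ≠ ⊤ → f y ≠ ⊤ →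
      (((p y x : ℝ) : EReal) < f x - f y ↔ p y x < F x - F y) := by
    intro x y hx hy
    rw [← EReal.coe_toReal hx (hreal x), ← EReal.coe_toReal hy (hreal y),
      ← EReal.coe_sub, EReal.coe_lt_coe_iff]
  have hcF : ∀ x : X, f x ≠ ⊤ → c ≤ F x := by
    intro x hx
    have h := hc x
    rw [← EReal.coe_toReal hx (hreal x)] at h
    exact_mod_cast h
  -- the infimum of F over S x
  set v : X → ℝ := fun x => sInf (F '' {y : X | ((p y x : ℝ) : EReal) < f x - f y})
    with hvdef
  have hbddS : ∀ x : X, BddBelow (F '' {y : X | ((p y x : ℝ) : EReal) < f x - f y}) := by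
    intro x
    refine ⟨c, ?_⟩
    rintro r ⟨y, hy, rfl⟩
    exact hcF y (htop x y hy)
  -- choice of a next point
  have key : ∀ x : X, f x ≠ ⊤ → ∃ y : X,
      ((p y x : ℝ) : EReal) < f x - f y ∧ f y ≠ ⊤ ∧ 2 * F y ≤ F x + v x := by
    intro x hx
    obtain ⟨y₀, hy₀⟩ := hS x
    have hy₀top := htop x y₀ hy₀
    have hy₀lt : p y₀ x < F x - F y₀ := (hlt_real x y₀ hx hy₀top).1 hy₀
    have hFy₀ : F y₀ < F x := by have := hp.1 y₀ x; linarith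
    have hvlt : v x < (F x + v x) / 2 := by
      have h1 : v x ≤ F y₀ := csInf_le (hbddS x) ⟨y₀, hy₀, rfl⟩
      have : v x < F x := lt_of_le_of_lt h1 hFy₀
      linarith
    obtain ⟨r, hr, hrlt⟩ := (csInf_lt_iff (hbddS x) ⟨F y₀, ⟨y₀, hy₀, rfl⟩⟩).1 hvlt
    obtain ⟨y, hyS, rfl⟩ := hr
    exact ⟨y, hyS, htop x y hyS, by linarith⟩
  choose! T hT1 hT2 hT3 using key
  set u : ℕ → X := fun n => T^[n] x₀ with hudef
  have hu0 : u 0 = x₀ := rfl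
  have husucc : ∀ n, u (n + 1) = T (u n) := by
    intro n
    simp [hudef, Function.iterate_succ_apply']
  have hD : ∀ n, f (u n) ≠ ⊤ := by
    intro n
    induction n with
    | zero => exact hx₀
    | succ n ih => rw [husucc]; exact hT2 (u n) ih
  have hstep : ∀ n, p (u (n + 1)) (u n) < F (u n) - F (u (n + 1)) := by
    intro n
    have h1 := hT1 (u n) (hD n)
    rw [← husucc] at h1
    exact (hlt_real (u n) (u (n + 1)) (hD n) (hD (n + 1))).1 h1
  have hchoice : ∀ n, 2 * F (u (n + 1)) ≤ F (u n) + v (u n) := by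
    intro n
    have := hT3 (u n) (hD n)
    rw [← husucc] at this
    exact this
  have hFanti : Antitone fun n => F (u n) := by
    apply antitone_nat_of_succ_le
    intro n
    have h1 := hstep n
    have h2 := hp.1 (u (n + 1)) (u n)
    linarith
  -- summability
  have hsum : ∀ n, ∑ i ∈ Finset.range n, p (u (i + 1)) (u i) ≤ F (u 0) - F (u n) := by
    intro n
    induction n with
    | zero => simp
    | succ n ih =>
      rw [Finset.sum_range_succ]
      have := hstep n
      linarith
  have hsummable : Summable fun i => p (u (i + 1)) (u i) := by
    apply summable_of_sum_range_le (c := F (u 0) - c) (fun i => hp.1 (u (i + 1)) (u i))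
    intro n
    have := hcF (u n) (hD n)
    have := hsum n
    linarith
  obtain ⟨φ, hφ, a, ha⟩ := hcomplete u hsummable
  -- f a ≤ f (u n) for all n
  have hanti' : Antitone fun i : ℕ => f (u (φ i)) := by
    intro i j hij
    simp only
    rw [← EReal.coe_toReal (hD (φ j)) (hreal _), ← EReal.coe_toReal (hD (φ i)) (hreal _),
      EReal.coe_le_coe_iff]
    exact hFanti (hφ.monotone hij)
  have hfa : ∀ i, f a ≤ f (u (φ i)) :=
    hlsc (u ∘ φ) a (fun i => (hD (φ i)).lt_top) ha hanti'
  have hatop : f a ≠ ⊤ := ((hfa 0).trans_lt (hD (φ 0)).lt_top).ne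
  have hFa : ∀ n, F a ≤ F (u n) := by
    intro n
    have h1 : F a ≤ F (u (φ n)) := by
      have := hfa n
      rw [← EReal.coe_toReal hatop (hreal a), ← EReal.coe_toReal (hD (φ n)) (hreal _),
        EReal.coe_le_coe_iff] at this
      exact this
    exact h1.trans (hFanti hφ.le_apply)
  -- limit of F (u n)
  set L : ℝ := ⨅ n, F (u n) with hLdef
  have hbddr : BddBelow (Set.range fun n => F (u n)) := by
    refine ⟨c, ?_⟩
    rintro r ⟨n, rfl⟩
    exact hcF (u n) (hD n)
  have htendL : Tendsto (fun n => F (u n)) atTop (𝓝 L) := tendsto_atTop_ciInf hFanti hbddr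
  have hFaL : F a ≤ L := le_ciInf hFa
  -- pick y in S a and derive contradiction
  obtain ⟨y, hy⟩ := hS a
  have hytop := htop a y hy
  have hyreal : p y a < F a - F y := (hlt_real a y hatop hytop).1 hy
  have hFyFa : F y < F a := by have := hp.1 y a; linarith
  have htendp : Tendsto (fun k => p y (u (φ k))) atTop (𝓝 (p y a)) :=
    ((hcont y).tendsto a).comp ha
  have hev : ∀ᶠ k in atTop, p y (u (φ k)) < F a - F y :=
    htendp.eventually_lt_const hyreal
  have hev2 : ∀ᶠ k in atTop, 2 * F (u (φ k + 1)) - F (u (φ k)) ≤ F y := by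
    filter_upwards [hev] with k hk
    have h1 : p y (u (φ k)) < F (u (φ k)) - F y := by
      have := hFa (φ k)
      linarith
    have hmem : ((p y (u (φ k)) : ℝ) : EReal) < f (u (φ k)) - f y :=
      (hlt_real (u (φ k)) y (hD (φ k)) hytop).2 h1
    have hvle : v (u (φ k)) ≤ F y := csInf_le (hbddS _) ⟨y, hmem, rfl⟩
    have := hchoice (φ k)
    linarith
  have htend1 : Tendsto (fun k => F (u (φ k))) atTop (𝓝 L) :=
    htendL.comp hφ.tendsto_atTop
  have htend2 : Tendsto (fun k => F (u (φ k + 1))) atTop (𝓝 L) := by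
    apply htendL.comp
    exact tendsto_atTop_mono (fun k => Nat.le_succ (φ k)) hφ.tendsto_atTop
  have htendg : Tendsto (fun k => 2 * F (u (φ k + 1)) - F (u (φ k))) atTop (𝓝 L) := by
    have := ((htend2.const_mul 2).sub htend1)
    have h2 : 2 * L - L = L := by ring
    rwa [h2] at this
  have hLy : L ≤ F y := le_of_tendsto htendg hev2
  linarith
end

section
/- Let (X, d) be a metric space with its metric topology τ, let S : X → Set X be a set-valued map, and let M = (x_i)_{i≥1} be an infinite S-orbit. Then M is τ-contractive if and only if M is d-contractive, i.e., there is a subsequence (x_{i_k}) converging to some point of X with sup_{y ∈ S(x_{i_k})} d(y, x_{i_k}) → 0 as k → ∞. -/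
open Filter Topology Set ENNReal

/-- A d-contractive orbit in a metric space: some subsequence converges to a point and
`sup_{y ∈ S (x (φ k))} d(y, x (φ k)) → 0` (the supremum taken in `ℝ≥0∞`). -/
def IsDContractive {X : Type*} [MetricSpace X] (S : X → Set X) (x : ℕ → X) : Prop :=
  ∃ φ : ℕ → ℕ, StrictMono φ ∧ (∃ a : X, Tendsto (x ∘ φ) atTop (𝓝 a)) ∧
    Tendsto (fun k => ⨆ y ∈ S (x (φ k)), edist y (x (φ k))) atTop (𝓝 0)

section Aux

open Metric

variable {X : Type*} [MetricSpace X] {S : X → Set X} {x : ℕ → X}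

/-- If for some point `a` the set of good indices is infinite for every radius,
the orbit is d-contractive. -/
lemma dContr_of_infinite (a : X)
    (h : ∀ ε > 0, {i : ℕ | x i ∈ ball a ε ∧ S (x i) ⊆ ball a ε}.Infinite) :
    IsDContractive S x := by
  have H : ∀ n m : ℕ, ∃ b, (x b ∈ ball a (1/(n+1)) ∧ S (x b) ⊆ ball a (1/(n+1))) ∧ m < b := by
    intro n m
    obtain ⟨b, hb, hb2⟩ := (h (1/(n+1)) (by positivity)).exists_gt m
    exact ⟨b, hb, hb2⟩
  choose f hf1 hf2 using H
  set φ : ℕ → ℕ := fun n => Nat.rec (f 0 0) (fun k ih => f (k+1) ih) n with hφ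
  have hmono : StrictMono φ := strictMono_nat_of_lt_succ fun n => hf2 (n+1) (φ n)
  have hmem : ∀ n : ℕ, x (φ n) ∈ ball a (1/(n+1)) ∧ S (x (φ n)) ⊆ ball a (1/(n+1)) := by
    intro n
    cases n with
    | zero => exact hf1 0 0
    | succ k => exact hf1 (k+1) (φ k)
  have hdiv : ∀ n : ℕ, (0:ℝ) < 1/(n+1) := fun n => by positivity
  refine ⟨φ, hmono, ⟨a, ?_⟩, ?_⟩
  · rw [Metric.tendsto_atTop]
    intro ε hε
    obtain ⟨N, hN⟩ := exists_nat_one_div_lt hε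
    refine ⟨N, fun n hn => ?_⟩
    have h1 : dist (x (φ n)) a < 1/(n+1) := mem_ball.mp (hmem n).1
    have h2 : (1:ℝ)/(n+1) ≤ 1/(N+1) := by
      apply one_div_le_one_div_of_le (by positivity)
      have : (N:ℝ) ≤ n := Nat.cast_le.mpr hn
      linarith
    calc dist ((x ∘ φ) n) a < 1/(n+1) := h1
      _ ≤ 1/(N+1) := h2
      _ < ε := hN
  · have hub : ∀ n, (⨆ y ∈ S (x (φ n)), edist y (x (φ n))) ≤ ENNReal.ofReal (2/(n+1)) := by
      intro n
      refine iSup₂_le fun y hy => ?_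
      have hya : dist y a < 1/(n+1) := mem_ball.mp ((hmem n).2 hy)
      have hxa : dist (x (φ n)) a < 1/(n+1) := mem_ball.mp (hmem n).1
      have h21 : (2:ℝ)/((n:ℝ)+1) = 1/(n+1) + 1/(n+1) := by ring
      have : dist y (x (φ n)) ≤ 2/(n+1) := by
        calc dist y (x (φ n)) ≤ dist y a + dist a (x (φ n)) := dist_triangle _ _ _
          _ = dist y a + dist (x (φ n)) a := by rw [dist_comm a]
          _ ≤ 2/(n+1) := by rw [h21]; linarith
      rw [edist_dist]
      exact ENNReal.ofReal_le_ofReal this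
    have hup : Tendsto (fun n : ℕ => ENNReal.ofReal (2/(n+1))) atTop (𝓝 0) := by
      have hreal : Tendsto (fun n : ℕ => 2/((n:ℝ)+1)) atTop (𝓝 0) := by
        have := tendsto_one_div_add_atTop_nhds_zero_nat.const_mul (2:ℝ)
        simpa [div_eq_mul_inv, mul_comm] using this
      have := (ENNReal.continuous_ofReal.tendsto 0).comp hreal
      simpa [Function.comp_def] using this
    exact tendsto_of_tendsto_of_tendsto_of_le_of_le tendsto_const_nhds hup
      (fun n => zero_le) hub

/-- If the orbit reaches a point whose image is contained in itself (a fixed point),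
the orbit is d-contractive. -/
lemma dContr_of_fix (horbit : IsOrbit S x) (i : ℕ) (h : S (x i) ⊆ {x i}) :
    IsDContractive S x := by
  have hconst : ∀ k, x (i + k) = x i := by
    intro k
    induction k with
    | zero => rfl
    | succ m ih =>
      have : x (i + m + 1) ∈ S (x (i + m)) := horbit (i + m)
      rw [ih] at this
      exact Set.mem_singleton_iff.mp (h this)
  refine ⟨fun k => i + k, fun a b hab => by show i + a < i + b; omega, ⟨x i, ?_⟩, ?_⟩
  · have : (x ∘ fun k => i + k) = fun _ => x i := funext fun k => hconst k
    rw [this]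
    exact tendsto_const_nhds
  · have : (fun k => ⨆ y ∈ S (x (i + k)), edist y (x (i + k))) = fun _ => (0 : ℝ≥0∞) := by
      funext k
      refine le_antisymm (iSup₂_le fun y hy => ?_) zero_le
      rw [hconst k] at hy ⊢
      have : y = x i := h hy
      simp [this]
    rw [this]
    exact tendsto_const_nhds

end Aux

/-- In a metric space, an infinite `S`-orbit is `τ`-contractive (for the metric
topology) if and only if it is d-contractive. -/
theorem tauContractive_iff_dContractive
    {X : Type*} [MetricSpace X] (S : X → Set X) (x : ℕ → X) (horbit : IsOrbit S x) :
    IsTauContractive S x ↔ IsDContractive S x := by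
  open Metric in
  constructor
  · intro htau
    by_contra hd
    -- no fixed point is reached
    have hfix : ∀ i, ¬ S (x i) ⊆ {x i} := fun i h => hd (dContr_of_fix horbit i h)
    -- for every point, the set of good indices is finite for some radius
    have hfin : ∀ a : X, ∃ ε > 0, {i : ℕ | x i ∈ ball a ε ∧ S (x i) ⊆ ball a ε}.Finite := by
      intro a
      by_contra h
      push_neg at h
      exact hd (dContr_of_infinite a fun ε hε => h ε hε)
    -- for every point, there is a radius such that no index is good at all
    have hr : ∀ a : X, ∃ r > 0, ∀ i, ¬(x i ∈ ball a r ∧ S (x i) ⊆ ball a r) := by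
      intro a
      obtain ⟨ε, hε, hF⟩ := hfin a
      have hδ : ∀ i : ℕ, ∃ d > 0, ∀ ρ ≤ d, ¬(x i ∈ ball a ρ ∧ S (x i) ⊆ ball a ρ) := by
        intro i
        by_cases hxi : x i = a
        · obtain ⟨z, hz, hz2⟩ := Set.not_subset.mp (hfix i)
          have hzne : z ≠ a := by
            intro hza; exact hz2 (by simp [hza, hxi])
          refine ⟨dist z a, dist_pos.mpr hzne, fun ρ hρ hcon => ?_⟩
          have : dist z a < ρ := mem_ball.mp (hcon.2 hz)
          linarith
        · refine ⟨dist (x i) a, dist_pos.mpr hxi, fun ρ hρ hcon => ?_⟩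
          have : dist (x i) a < ρ := mem_ball.mp hcon.1
          linarith
      choose δ hδ0 hδ1 using hδ
      classical
      set t : Finset ℝ := insert ε (hF.toFinset.image δ) with ht
      have htne : t.Nonempty := ⟨ε, Finset.mem_insert_self _ _⟩
      refine ⟨t.min' htne, ?_, ?_⟩
      · rw [gt_iff_lt, Finset.lt_min'_iff]
        intro b hb
        rcases Finset.mem_insert.mp hb with hb | hb
        · exact hb ▸ hε
        · obtain ⟨i, _, rfl⟩ := Finset.mem_image.mp hb
          exact hδ0 i
      · intro i hcon
        have hle : t.min' htne ≤ ε := Finset.min'_le _ _ (Finset.mem_insert_self _ _)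
        have hiF : i ∈ {i : ℕ | x i ∈ ball a ε ∧ S (x i) ⊆ ball a ε} :=
          ⟨ball_subset_ball hle hcon.1, hcon.2.trans (ball_subset_ball hle)⟩
        have hmem : δ i ∈ t :=
          Finset.mem_insert_of_mem (Finset.mem_image_of_mem δ (hF.mem_toFinset.mpr hiF))
        exact hδ1 i (t.min' htne) (Finset.min'_le _ _ hmem) hcon
    choose r hr0 hr1 using hr
    obtain ⟨U, hU, i₀, h1, h2⟩ := htau (Set.range fun a => ball a (r a))
      (by rintro U ⟨a, rfl⟩; exact isOpen_ball)
      (by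
        apply Set.eq_univ_of_forall
        intro p
        exact ⟨ball p (r p), ⟨p, rfl⟩, mem_ball_self (hr0 p)⟩)
    obtain ⟨a, rfl⟩ := hU
    exact hr1 a i₀ ⟨h1, h2⟩
  · rintro ⟨φ, hφ, ⟨a, ha⟩, hsup⟩ γ hopen hcov
    have haU : a ∈ ⋃₀ γ := hcov ▸ Set.mem_univ a
    obtain ⟨U, hU, haU⟩ := haU
    obtain ⟨ε, hε, hball⟩ := Metric.isOpen_iff.mp (hopen U hU) a haU
    have h1 : ∀ᶠ k in atTop, (x ∘ φ) k ∈ ball a (ε/2) :=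
      ha (Metric.ball_mem_nhds a (by positivity))
    have h2 : ∀ᶠ k in atTop,
        (⨆ y ∈ S (x (φ k)), edist y (x (φ k))) < ENNReal.ofReal (ε/2) :=
      hsup.eventually_lt_const (ENNReal.ofReal_pos.mpr (by positivity))
    obtain ⟨k, hk1, hk2⟩ := (h1.and h2).exists
    have hxk : dist (x (φ k)) a < ε/2 := mem_ball.mp hk1
    refine ⟨U, hU, φ k, hball (mem_ball.mpr (by linarith)), fun y hy => hball ?_⟩
    have hyd : edist y (x (φ k)) < ENNReal.ofReal (ε/2) :=
      lt_of_le_of_lt (le_iSup₂ (f := fun z (_ : z ∈ S (x (φ k))) => edist z (x (φ k))) y hy) hk2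
    have : dist y (x (φ k)) < ε/2 := edist_lt_ofReal.mp hyd
    exact mem_ball.mpr (by
      calc dist y a ≤ dist y (x (φ k)) + dist (x (φ k)) a := dist_triangle _ _ _
        _ < ε := by linarith)
end

section
/- Let (X, d) be a metric space, let S : X → Set X be a set-valued map, and let M = (x_i)_{i≥1} be a d-contractive infinite S-orbit satisfying property (⋆̄). Then there exists a strong accumulation point x̄ of M such that S(x̄) ⊆ {x̄}. -/
open Filter Topology Set

/-- In a metric space, a d-contractive infinite `S`-orbit satisfying `(⋆̄)` has a
strong accumulation point `xbar` with `S xbar ⊆ {xbar}`. -/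
theorem strongAccPoint_of_dContractive_star
    {X : Type*} [MetricSpace X] (S : X → Set X) (x : ℕ → X)
    (horbit : IsOrbit S x) (hcontr : IsDContractive S x) (hstar : PropStarBar S x) :
    ∃ xbar : X, IsStrongAccPoint S x xbar ∧ S xbar ⊆ {xbar} := by

  obtain ⟨φ, hφ, ⟨a, ha⟩, hsup⟩ := hcontr
  set g : ℕ → ENNReal := fun k => ⨆ y ∈ S (x (φ k)), edist y (x (φ k)) with hg
  have hsup' : ∀ ε : ENNReal, 0 < ε → ∀ᶠ k in atTop, g k ≤ ε :=
    ENNReal.tendsto_nhds_zero.mp hsup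
  refine ⟨a, ?_, ?_⟩
  · -- strong accumulation point
    intro U hU
    obtain ⟨ε, hε, hball⟩ := Metric.mem_nhds_iff.mp hU
    have h1 : ∀ᶠ k in atTop, dist (x (φ k)) a < ε / 2 := by
      have := Metric.tendsto_atTop.mp ha (ε / 2) (by linarith)
      obtain ⟨N, hN⟩ := this
      exact eventually_atTop.mpr ⟨N, fun k hk => hN k hk⟩
    have h2 : ∀ᶠ k in atTop, g k ≤ ENNReal.ofReal (ε / 2) :=
      hsup' _ (by positivity)
    obtain ⟨N, hN⟩ := eventually_atTop.mp (h1.and h2)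
    apply Set.infinite_of_not_bddAbove
    rintro ⟨B, hB⟩
    have hk := hN (max N (B + 1)) (le_max_left _ _)
    have hmem : φ (max N (B + 1)) ∈ {i : ℕ | x i ∈ U ∧ S (x i) ⊆ U} := by
      constructor
      · apply hball
        simp only [Metric.mem_ball]
        linarith [hk.1]
      · intro z hz
        apply hball
        have hle : edist z (x (φ (max N (B + 1)))) ≤ ENNReal.ofReal (ε / 2) := by
          refine le_trans ?_ hk.2
          exact le_iSup₂ (f := fun y (_ : y ∈ S (x (φ (max N (B + 1))))) =>
            edist y (x (φ (max N (B + 1))))) z hz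
        rw [edist_dist, ENNReal.ofReal_le_ofReal_iff (by linarith)] at hle
        have := dist_triangle z (x (φ (max N (B + 1)))) a
        simp only [Metric.mem_ball]
        linarith [hk.1]
    have := hB hmem
    have : B + 1 ≤ φ (max N (B + 1)) := le_trans (le_max_right _ _) hφ.le_apply
    omega
  · -- S a ⊆ {a}
    intro y hy
    by_contra hne
    have hne' : y ≠ a := by simpa using hne
    obtain ⟨ψ, hψ, Y, hYmem, hYy⟩ := hstar φ hφ a ha y hy hne'
    -- edist (Y j) (x (φ (ψ j))) → 0
    have hedist : Tendsto (fun j => edist (Y j) (x (φ (ψ j)))) atTop (𝓝 0) := by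
      have hle : ∀ j, edist (Y j) (x (φ (ψ j))) ≤ g (ψ j) := fun j =>
        le_iSup₂ (f := fun y (_ : y ∈ S (x (φ (ψ j)))) => edist y (x (φ (ψ j)))) (Y j) (hYmem j)
      rw [ENNReal.tendsto_nhds_zero]
      intro ε hε
      filter_upwards [ENNReal.tendsto_nhds_zero.mp (hsup.comp hψ.tendsto_atTop) ε hε]
        with j hj using le_trans (hle j) hj
    have hdist : Tendsto (fun j => dist (Y j) (x (φ (ψ j)))) atTop (𝓝 0) := by
      have := (ENNReal.tendsto_toReal (by simp)).comp hedist
      simpa only [Function.comp_def, ← dist_edist, ENNReal.toReal_zero] using this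
    have hxa : Tendsto (fun j => x (φ (ψ j))) atTop (𝓝 a) :=
      ha.comp hψ.tendsto_atTop
    have hdista : Tendsto (fun j => dist (x (φ (ψ j))) a) atTop (𝓝 0) := by
      rw [← tendsto_iff_dist_tendsto_zero]; exact hxa
    have hYa : Tendsto Y atTop (𝓝 a) := by
      rw [tendsto_iff_dist_tendsto_zero]
      apply squeeze_zero (fun j => dist_nonneg)
        (fun j => dist_triangle (Y j) (x (φ (ψ j))) a)
      simpa using hdist.add hdista
    exact hne' (tendsto_nhds_unique hYy hYa)
end

section
/- Let (X, d) be a metric space with metric topology τ, and let f : X → X be a continuous, t-contractive mapping with fixed point x̄ (so f(x̄) = x̄). Suppose there exists a neighborhood O of x̄ such that for every open cover γ of X there exists n ∈ ℕ such that for all a, b ∈ O and all i ≥ n there exists U ∈ γ with f^i(a) ∈ U and f^i(b) ∈ U. Then there exists a metric d̄ on X that generates the same topology as d and a constant 0 ≤ k < 1 such that d̄(f(x), f(y)) ≤ k·d̄(x, y) for all x, y ∈ X, and x̄ is the unique fixed point of f. -/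
open Filter Topology Set

/-- `f` is topologically contractive (t-contractive): for every open cover `γ` of `X`
and every pair of points `a b`, there exists `n` such that for all `i ≥ n` there is
`U ∈ γ` containing both `f^[i] a` and `f^[i] b`. -/
def TContractive {X : Type*} [TopologicalSpace X] (f : X → X) : Prop :=
  ∀ γ : Set (Set X), (∀ U ∈ γ, IsOpen U) → ⋃₀ γ = Set.univ →
    ∀ a b : X, ∃ n : ℕ, ∀ i ≥ n, ∃ U ∈ γ, f^[i] a ∈ U ∧ f^[i] b ∈ U

namespace BanachTConAux

/-- clamp a real number into `[0,1]`. -/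
noncomputable def clamp (t : ℝ) : ℝ := max 0 (min t 1)

lemma clamp_nonneg (t : ℝ) : 0 ≤ clamp t := le_max_left _ _

lemma clamp_le_one (t : ℝ) : clamp t ≤ 1 := max_le (by norm_num) (min_le_right _ _)

lemma clamp_of_nonpos {t : ℝ} (h : t ≤ 0) : clamp t = 0 := by
  unfold clamp
  rw [max_eq_left]
  exact le_trans (min_le_left _ _) h

lemma clamp_of_one_le {t : ℝ} (h : 1 ≤ t) : clamp t = 1 := by
  unfold clamp
  rw [min_eq_right h, max_eq_right (by norm_num)]

lemma clamp_lip (s t : ℝ) : |clamp s - clamp t| ≤ |s - t| := by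
  unfold clamp
  rw [max_comm 0 (min s 1), max_comm 0 (min t 1)]
  refine le_trans (abs_max_sub_max_le_abs _ _ _) ?_
  have := abs_min_sub_min_le_max s 1 t 1
  simpa using this

/-- All data needed for the construction. -/
structure MSetup (X : Type*) [MetricSpace X] where
  f : X → X
  hf : Continuous f
  xb : X
  hfix : f xb = xb
  attract : ∀ x : X, ∀ ε : ℝ, 0 < ε → ∃ n : ℕ, ∀ i, n ≤ i → dist (f^[i] x) xb < ε
  r0 : ℝ
  r0pos : 0 < r0
  unif : ∀ ε : ℝ, 0 < ε → ∃ n : ℕ, ∀ z : X, dist z xb < r0 →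
    ∀ i, n ≤ i → dist (f^[i] z) xb < ε

namespace MSetup

variable {X : Type*} [MetricSpace X] (A : MSetup X)

/-! ### radii and times -/

noncomputable def b (j : ℕ) : ℝ := A.r0 / (4 * 2 ^ j)

lemma b_pos (j : ℕ) : 0 < A.b j := div_pos A.r0pos (by positivity)

lemma b_succ (j : ℕ) : A.b (j + 1) = A.b j / 2 := by
  unfold b; rw [pow_succ]; ring

lemma b_anti {j j' : ℕ} (h : j ≤ j') : A.b j' ≤ A.b j := by
  unfold b
  apply div_le_div_of_nonneg_left A.r0pos.le (by positivity)
  have : (2:ℝ) ^ j ≤ 2 ^ j' := pow_le_pow_right₀ one_le_two h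
  nlinarith

lemma b_le_quarter (j : ℕ) : A.b j ≤ A.r0 / 4 := by
  have h := A.b_anti (Nat.zero_le j)
  have h0 : A.b 0 = A.r0 / 4 := by unfold b; norm_num
  linarith

lemma b_lt_r0 (j : ℕ) : A.b j < A.r0 := by
  have h := A.b_le_quarter j
  have := A.r0pos
  linarith

lemma b_tendsto : ∀ ε : ℝ, 0 < ε → ∃ j : ℕ, A.b j < ε := by
  intro ε hε
  obtain ⟨j, hj⟩ := pow_unbounded_of_one_lt (A.r0 / (4 * ε)) (one_lt_two (α := ℝ))
  refine ⟨j, ?_⟩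
  have h2 : (0:ℝ) < 2 ^ j := by positivity
  unfold b
  rw [div_lt_iff₀ (by positivity)]
  rw [div_lt_iff₀ (by positivity)] at hj
  nlinarith

noncomputable def T (j : ℕ) : ℕ := (A.unif (A.b (j+1)) (A.b_pos _)).choose

lemma T_spec (j : ℕ) : ∀ z, dist z A.xb < A.r0 → ∀ i, A.T j ≤ i →
    dist (A.f^[i] z) A.xb < A.b (j+1) :=
  (A.unif (A.b (j+1)) (A.b_pos _)).choose_spec

noncomputable def S (A : MSetup X) : ℕ → ℕ
  | 0 => 2 * A.T 0 + 2
  | j + 1 => max (2 * S A j) (2 * A.T (j+1) + 2)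

lemma T_le_S (j : ℕ) : 2 * A.T j + 2 ≤ A.S j := by
  cases j with
  | zero => exact le_refl _
  | succ j => exact le_max_right _ _

lemma S_double (j : ℕ) : 2 * A.S j ≤ A.S (j+1) := le_max_left _ _

lemma two_le_S (j : ℕ) : 2 ≤ A.S j := le_trans (by omega) (A.T_le_S j)

lemma S_lt_succ (j : ℕ) : A.S j < A.S (j+1) := by
  have h1 := A.S_double j
  have h2 := A.two_le_S j
  omega

lemma S_mono : Monotone A.S := monotone_nat_of_le_succ fun j => (A.S_lt_succ j).le

lemma add_two_le_S (j : ℕ) : j + 2 ≤ A.S j := by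
  induction j with
  | zero => exact A.two_le_S 0
  | succ j ih =>
    have h1 := A.S_double j
    omega

/-! ### the index function -/

noncomputable def jj (m : ℤ) : ℕ := Nat.findGreatest (fun j => (A.S j : ℤ) ≤ m) m.toNat

lemma jj_ge {j : ℕ} {m : ℤ} (h : (A.S j : ℤ) ≤ m) : j ≤ A.jj m := by
  apply Nat.le_findGreatest _ h
  have h2 : (j:ℤ) + 2 ≤ (A.S j : ℤ) := by exact_mod_cast A.add_two_le_S j
  omega

lemma jj_spec {m : ℤ} (h : (A.S 0 : ℤ) ≤ m) : (A.S (A.jj m) : ℤ) ≤ m :=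
  Nat.findGreatest_spec (P := fun j => (A.S j : ℤ) ≤ m) (Nat.zero_le m.toNat) h

lemma lt_S_jj_succ (m : ℤ) : m < (A.S (A.jj m + 1) : ℤ) := by
  by_contra h
  push_neg at h
  have := A.jj_ge h
  omega

lemma jj_mono {m m' : ℤ} (h : m ≤ m') : A.jj m ≤ A.jj m' :=
  Nat.findGreatest_mono (fun n hn => le_trans hn h) (Int.toNat_le_toNat h)

lemma jj_zero {m : ℤ} (h : m < (A.S 0 : ℤ)) : A.jj m = 0 := by
  rw [jj, Nat.findGreatest_eq_zero_iff]
  intro n _ _ hP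
  have h0 : (A.S 0 : ℤ) ≤ (A.S n : ℤ) := by exact_mod_cast A.S_mono (Nat.zero_le n)
  omega

/-! ### the radius schedule -/

noncomputable def R (m : ℤ) : ℝ := A.b (A.jj m) * (1 + (2:ℝ) ^ (-m - 1))

lemma e_pos (m : ℤ) : (0:ℝ) < (2:ℝ) ^ (-m - 1) := zpow_pos (by norm_num) _

lemma R_pos (m : ℤ) : 0 < A.R m := by
  have h := e_pos m
  have hb := A.b_pos (A.jj m)
  unfold R; nlinarith

lemma b_lt_R (m : ℤ) : A.b (A.jj m) < A.R m := by
  have h := e_pos m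
  have hb := A.b_pos (A.jj m)
  unfold R; nlinarith

lemma R_le_bound {m : ℤ} (hm : 1 ≤ m) : A.R m ≤ A.b (A.jj m) * (5/4) := by
  have h2 : (2:ℝ) ^ (-m - 1) ≤ (2:ℝ) ^ (-2 : ℤ) :=
    zpow_le_zpow_right₀ one_le_two (by omega)
  have hb := (A.b_pos (A.jj m)).le
  have h4 : (2:ℝ) ^ (-m - 1) ≤ 1/4 := by
    refine le_trans h2 ?_
    norm_num
  unfold R; nlinarith [mul_le_mul_of_nonneg_left h4 hb]

lemma R_lt_r0 {m : ℤ} (hm : 1 ≤ m) : A.R m < A.r0 := by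
  have h1 := A.R_le_bound hm
  have h2 := A.b_le_quarter (A.jj m)
  have h3 := A.r0pos
  linarith

lemma R_succ_lt {m : ℤ} (hm : 1 ≤ m) : A.R (m+1) < A.R m := by
  have hj := A.jj_mono (le_of_lt (lt_add_one m))
  have he1 : (2:ℝ) ^ (-(m+1) - 1) < (2:ℝ) ^ (-m - 1) :=
    zpow_lt_zpow_right₀ one_lt_two (by omega)
  rcases eq_or_lt_of_le hj with heq | hlt
  · unfold R
    rw [← heq]
    have := A.b_pos (A.jj m)
    nlinarith
  · have hb' : A.b (A.jj (m+1)) ≤ A.b (A.jj m) / 2 := by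
      calc A.b (A.jj (m+1)) ≤ A.b (A.jj m + 1) := A.b_anti hlt
        _ = A.b (A.jj m) / 2 := A.b_succ _
    have he2 : (0:ℝ) < (2:ℝ) ^ (-(m+1) - 1) := e_pos _
    have he3 : (2:ℝ) ^ (-(m+1) - 1) ≤ 1 := by
      have := zpow_le_zpow_right₀ (one_le_two (α := ℝ)) (show -(m+1) - 1 ≤ 0 by omega)
      simpa using this
    have hbp := A.b_pos (A.jj m)
    have he4 := e_pos m
    have hb2 : 0 ≤ A.b (A.jj (m+1)) := (A.b_pos _).le
    unfold R
    nlinarith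
  
lemma R_anti {m m' : ℤ} (h1 : 1 ≤ m) (h : m ≤ m') : A.R m' ≤ A.R m := by
  have H : ∀ k : ℕ, A.R (m + k) ≤ A.R m := by
    intro k
    induction k with
    | zero => simp
    | succ k ih =>
      have hstep : A.R (m + k + 1) ≤ A.R (m + k) := (A.R_succ_lt (by omega)).le
      have h2 : (m + ((k:ℕ)+1 : ℕ) : ℤ) = m + k + 1 := by push_cast; ring
      rw [h2]; linarith
  obtain ⟨k, rfl⟩ : ∃ k : ℕ, m' = m + k := ⟨(m' - m).toNat, by omega⟩
  exact H k


/-! ### the nested invariant sets -/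

def W (n : ℤ) : Set X :=
  {x | ∀ i : ℕ, 1 ≤ n + (i:ℤ) → dist (A.f^[i] x) A.xb < A.R (n + i)}

lemma window {n : ℤ} {x : X}
    (h : ∀ i : ℕ, 1 ≤ n + (i:ℤ) → n + (i:ℤ) ≤ (A.S (A.jj (max n 1) + 2) : ℤ) →
      dist (A.f^[i] x) A.xb < A.R (n + i)) :
    x ∈ A.W n := by
  intro i
  induction i using Nat.strong_induction_on with
  | _ i IH =>
    intro h1
    by_cases hE : n + (i:ℤ) ≤ (A.S (A.jj (max n 1) + 2) : ℤ)
    · exact h i h1 hE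
    push_neg at hE
    set J := A.jj (max n 1) with hJ
    set m : ℤ := n + (i:ℤ) with hm
    set q : ℤ := max n 1 with hq
    have hn1 : n ≤ q := le_max_left _ _
    have h11 : 1 ≤ q := le_max_right _ _
    have hm1 : (A.S (J + 2) : ℤ) < m := hE
    have hj2 : J + 2 ≤ A.jj m := A.jj_ge (le_of_lt hm1)
    set j := A.jj m with hj
    have hS0 : (A.S 0 : ℤ) ≤ m := by
      have h2 : (A.S 0 : ℤ) ≤ (A.S (J+2) : ℤ) := by
        exact_mod_cast A.S_mono (Nat.zero_le (J+2))
      omega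
    have hSj : (A.S j : ℤ) ≤ m := A.jj_spec hS0
    have hTj : 2 * A.T j + 2 ≤ A.S j := A.T_le_S j
    have hj4 : j + 2 ≤ A.S j := A.add_two_le_S j
    set lead : ℕ := max (A.T j) 1 with hlead
    have hlead1 : 1 ≤ lead := le_max_right _ _
    have hlead2 : 2 * lead ≤ A.S j - 2 := by
      have hTl : A.T j ≤ lead := le_max_left _ _
      have : lead = A.T j ∨ lead = 1 := by omega
      rcases this with hl | hl <;> omega
    have hmax : q < (A.S (J+1) : ℤ) := A.lt_S_jj_succ q
    have hdouble : 2 * A.S (J+1) ≤ A.S (J+2) := A.S_double (J+1)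
    have hkey : q + 1 ≤ m - lead := by omega
    have hleadi : (lead:ℤ) < (i:ℤ) := by omega
    set is : ℕ := i - lead with his
    have hisi : is < i := by omega
    have hisZ : (is:ℤ) = (i:ℤ) - (lead:ℤ) := by omega
    have h1s : 1 ≤ n + (is:ℤ) := by omega
    have hR' := IH is hisi h1s
    have hz : dist (A.f^[is] x) A.xb < A.r0 := lt_trans hR' (A.R_lt_r0 h1s)
    have hTle : A.T j ≤ lead := le_max_left _ _
    have hfar := A.T_spec j _ hz lead hTle
    rw [← Function.iterate_add_apply] at hfar
    have hils : lead + is = i := by omega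
    rw [hils] at hfar
    have hbj : A.b (j+1) < A.b j := by
      rw [A.b_succ]; have := A.b_pos j; linarith
    have hb2 := A.b_lt_R m
    rw [← hj] at hb2
    linarith

lemma W_finite_char (n : ℤ) {x : X}
    (h : ∀ i : ℕ, i < (A.S (A.jj (max n 1) + 2)) + 1 + n.natAbs →
      (1 ≤ n + (i:ℤ) → n + (i:ℤ) ≤ (A.S (A.jj (max n 1) + 2) : ℤ) →
        dist (A.f^[i] x) A.xb < A.R (n + i))) :
    x ∈ A.W n := by
  apply A.window
  intro i h1 h2
  exact h i (by omega) h1 h2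

lemma W_open (n : ℤ) : IsOpen (A.W n) := by
  have hsub : A.W n = ⋂ i ∈ Finset.range ((A.S (A.jj (max n 1) + 2)) + 1 + n.natAbs),
      {x : X | 1 ≤ n + (i:ℤ) → n + (i:ℤ) ≤ (A.S (A.jj (max n 1) + 2) : ℤ) →
        dist (A.f^[i] x) A.xb < A.R (n + i)} := by
    apply Set.Subset.antisymm
    · intro x hx
      simp only [Set.mem_iInter]
      intro i _ h1 _
      exact hx i h1
    · intro x hx
      apply A.W_finite_char
      intro i hi h1 h2
      simp only [Set.mem_iInter] at hx
      exact hx i (Finset.mem_range.mpr hi) h1 h2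
  rw [hsub]
  apply isOpen_biInter_finset
  intro i _
  by_cases h1 : 1 ≤ n + (i:ℤ)
  · by_cases h2 : n + (i:ℤ) ≤ (A.S (A.jj (max n 1) + 2) : ℤ)
    · have heq : {x : X | 1 ≤ n + (i:ℤ) → n + (i:ℤ) ≤ (A.S (A.jj (max n 1) + 2) : ℤ) →
          dist (A.f^[i] x) A.xb < A.R (n + i)} =
          (A.f^[i]) ⁻¹' (Metric.ball A.xb (A.R (n + i))) := by
        ext z
        simp only [Set.mem_setOf_eq, Set.mem_preimage, Metric.mem_ball]
        constructor
        · intro hz; exact hz h1 h2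
        · intro hz _ _; exact hz
      rw [heq]
      exact Metric.isOpen_ball.preimage (A.hf.iterate i)
    · have heq : {x : X | 1 ≤ n + (i:ℤ) → n + (i:ℤ) ≤ (A.S (A.jj (max n 1) + 2) : ℤ) →
          dist (A.f^[i] x) A.xb < A.R (n + i)} = Set.univ := by
        ext z
        simp only [Set.mem_setOf_eq, Set.mem_univ, iff_true]
        intro _ hc
        exact absurd hc h2
      rw [heq]; exact isOpen_univ
  · have heq : {x : X | 1 ≤ n + (i:ℤ) → n + (i:ℤ) ≤ (A.S (A.jj (max n 1) + 2) : ℤ) →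
        dist (A.f^[i] x) A.xb < A.R (n + i)} = Set.univ := by
      ext z
      simp only [Set.mem_setOf_eq, Set.mem_univ, iff_true]
      intro hc
      exact absurd hc h1
    rw [heq]; exact isOpen_univ

lemma W_antitone {n n' : ℤ} (h : n ≤ n') : A.W n' ⊆ A.W n := by
  intro x hx i h1
  have h1' : 1 ≤ n' + (i:ℤ) := by omega
  have h2 := hx i h1'
  have h3 : A.R (n' + i) ≤ A.R (n + i) := A.R_anti h1 (by omega)
  linarith

lemma xb_mem_W (n : ℤ) : A.xb ∈ A.W n := by
  intro i _
  rw [Function.iterate_fixed A.hfix, dist_self]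
  exact A.R_pos _

lemma f_mem_W {n : ℤ} {x : X} (h : x ∈ A.W n) : A.f x ∈ A.W (n + 1) := by
  intro i h1
  have h1' : 1 ≤ n + ((i+1 : ℕ):ℤ) := by push_cast; omega
  have h2 := h (i+1) h1'
  rw [Function.iterate_succ_apply] at h2
  have harg : n + ((i+1 : ℕ):ℤ) = (n+1) + (i:ℤ) := by push_cast; ring
  rw [harg] at h2
  exact h2

lemma W_small {n : ℤ} (hn : 1 ≤ n) {x : X} (h : x ∈ A.W n) : dist x A.xb < A.R n := by
  have h0 := h 0 (by simpa using hn)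
  simpa using h0

lemma W_cover (x : X) : ∃ n : ℤ, x ∈ A.W n := by
  obtain ⟨i1, hi1⟩ := A.attract x (A.b 1) (A.b_pos 1)
  refine ⟨-(i1:ℤ), fun i h1 => ?_⟩
  set m : ℤ := -(i1:ℤ) + (i:ℤ) with hm
  have hm1 : 1 ≤ m := h1
  by_cases hS : (A.S 0 : ℤ) ≤ m
  · set j := A.jj m with hj
    have hSj : (A.S j : ℤ) ≤ m := A.jj_spec hS
    have hTj : 2 * A.T j + 2 ≤ A.S j := A.T_le_S j
    have hz : dist (A.f^[i1] x) A.xb < A.r0 :=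
      lt_trans (hi1 i1 (le_refl _)) (A.b_lt_r0 1)
    have hTm : A.T j ≤ m.toNat := by omega
    have hd := A.T_spec j _ hz m.toNat hTm
    rw [← Function.iterate_add_apply] at hd
    have hieq : m.toNat + i1 = i := by omega
    rw [hieq] at hd
    have hb1 : A.b (j+1) < A.b j := by
      rw [A.b_succ]; have := A.b_pos j; linarith
    have hb2 := A.b_lt_R m
    rw [← hj] at hb2
    linarith
  · push_neg at hS
    have hj0 : A.jj m = 0 := A.jj_zero hS
    have hd : dist (A.f^[i] x) A.xb < A.b 1 := hi1 i (by omega)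
    have hb2 := A.b_lt_R m
    rw [hj0] at hb2
    have hb1 : A.b 1 < A.b 0 := by
      rw [A.b_succ]; have := A.b_pos 0; linarith
    linarith

/-! ### levels -/

lemma lev_exists {x : X} (hx : x ≠ A.xb) :
    ∃ n : ℤ, x ∈ A.W n ∧ ∀ n', x ∈ A.W n' → n' ≤ n := by
  have hd : 0 < dist x A.xb := dist_pos.mpr hx
  obtain ⟨j1, hj1⟩ := A.b_tendsto (dist x A.xb * (4/5)) (by positivity)
  apply Int.exists_greatest_of_bdd
  · refine ⟨(A.S j1 : ℤ), fun n hn => ?_⟩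
    by_contra hlt
    push_neg at hlt
    have hn1 : (1:ℤ) ≤ n := by
      have := A.two_le_S j1; omega
    have h0 : dist x A.xb < A.R n := A.W_small hn1 hn
    have hjn : j1 ≤ A.jj n := A.jj_ge (by omega)
    have hr := A.R_le_bound hn1
    have hb : A.b (A.jj n) ≤ A.b j1 := A.b_anti hjn
    nlinarith
  · exact A.W_cover x

open Classical in
noncomputable def lev (x : X) : ℤ :=
  if h : x = A.xb then 0 else (A.lev_exists h).choose

lemma lev_mem {x : X} (h : x ≠ A.xb) : x ∈ A.W (A.lev x) := by
  rw [lev, dif_neg h]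
  exact (A.lev_exists h).choose_spec.1

lemma lev_ge {x : X} {n : ℤ} (h : x ≠ A.xb) (hn : x ∈ A.W n) : n ≤ A.lev x := by
  rw [lev, dif_neg h]
  exact (A.lev_exists h).choose_spec.2 n hn

open Classical in
noncomputable def phi (x : X) : ℝ := if x = A.xb then 0 else (2:ℝ) ^ (-(A.lev x))

lemma phi_nonneg (x : X) : 0 ≤ A.phi x := by
  unfold phi
  split
  · exact le_refl _
  · exact (zpow_pos (by norm_num) _).le

lemma phi_xb : A.phi A.xb = 0 := by unfold phi; simp

lemma phi_pos {x : X} (h : x ≠ A.xb) : 0 < A.phi x := by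
  unfold phi; rw [if_neg h]; exact zpow_pos (by norm_num) _

lemma phi_f (x : X) : A.phi (A.f x) ≤ A.phi x / 2 := by
  by_cases hx : x = A.xb
  · subst hx; rw [A.hfix, A.phi_xb]; norm_num
  by_cases hfx : A.f x = A.xb
  · rw [hfx, A.phi_xb]
    have := A.phi_nonneg x; linarith
  have hlev : A.lev x + 1 ≤ A.lev (A.f x) :=
    A.lev_ge hfx (A.f_mem_W (A.lev_mem hx))
  unfold phi
  rw [if_neg hx, if_neg hfx]
  have h2 : (2:ℝ) ^ (-(A.lev (A.f x))) ≤ (2:ℝ) ^ (-(A.lev x) - 1) :=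
    zpow_le_zpow_right₀ one_le_two (by omega)
  have h3 : (2:ℝ) ^ (-(A.lev x) - 1) = (2:ℝ) ^ (-(A.lev x)) / 2 := by
    rw [zpow_sub₀ (by norm_num : (2:ℝ) ≠ 0)]
    norm_num
  rw [h3] at h2
  exact h2

lemma phi_ge_of_not_mem {z : X} {M : ℤ} (h : z ∉ A.W (M + 1)) :
    (2:ℝ) ^ (-M) ≤ A.phi z := by
  have hz : z ≠ A.xb := by rintro rfl; exact h (A.xb_mem_W _)
  have hlev : A.lev z ≤ M := by
    by_contra hlt
    push_neg at hlt
    exact h (A.W_antitone (by omega) (A.lev_mem hz))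
  unfold phi; rw [if_neg hz]
  exact zpow_le_zpow_right₀ one_le_two (by omega)

lemma phi_le_of_mem {x y : X} (hx : x ≠ A.xb) (hy : y ∈ A.W (A.lev x)) :
    A.phi y ≤ A.phi x := by
  by_cases hyb : y = A.xb
  · rw [hyb, A.phi_xb]; exact A.phi_nonneg x
  have := A.lev_ge hyb hy
  unfold phi; rw [if_neg hx, if_neg hyb]
  exact zpow_le_zpow_right₀ one_le_two (by omega)


/-! ### the sup-metric along orbits -/

noncomputable def dd (x y : X) : ℝ := ⨆ i : ℕ, dist (A.f^[i] x) (A.f^[i] y)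

lemma orbit_tendsto (x : X) :
    Tendsto (fun i : ℕ => A.f^[i] x) atTop (𝓝 A.xb) := by
  rw [Metric.tendsto_atTop]
  intro ε hε
  obtain ⟨n, hn⟩ := A.attract x ε hε
  exact ⟨n, fun i hi => hn i hi⟩

lemma dd_bdd (x y : X) :
    BddAbove (Set.range fun i : ℕ => dist (A.f^[i] x) (A.f^[i] y)) := by
  have h := (A.orbit_tendsto x).dist (A.orbit_tendsto y)
  rw [dist_self] at h
  exact h.bddAbove_range

lemma dd_le (x y : X) (i : ℕ) : dist (A.f^[i] x) (A.f^[i] y) ≤ A.dd x y :=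
  le_ciSup (A.dd_bdd x y) i

lemma dist_le_dd (x y : X) : dist x y ≤ A.dd x y := by
  have := A.dd_le x y 0
  simpa using this

lemma dd_nonneg (x y : X) : 0 ≤ A.dd x y :=
  le_trans dist_nonneg (A.dist_le_dd x y)

lemma dd_self (x : X) : A.dd x x = 0 := by
  unfold dd
  simp [dist_self]

lemma dd_comm (x y : X) : A.dd x y = A.dd y x := by
  unfold dd
  simp only [dist_comm]

lemma dd_f (x y : X) : A.dd (A.f x) (A.f y) ≤ A.dd x y := by
  apply ciSup_le
  intro i
  have h := A.dd_le x y (i+1)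
  rw [Function.iterate_succ_apply] at h
  exact h

lemma dd_lip (a b : X) (i : ℕ) :
    |dist (A.f^[i] a) A.xb - dist (A.f^[i] b) A.xb| ≤ A.dd a b :=
  le_trans (abs_dist_sub_le _ _ _) (A.dd_le a b i)

lemma iter_cont (x : X) (K : ℕ) {ε : ℝ} (hε : 0 < ε) :
    ∃ δ > 0, ∀ y, dist x y < δ → ∀ i ≤ K, dist (A.f^[i] x) (A.f^[i] y) < ε := by
  induction K with
  | zero =>
    refine ⟨ε, hε, fun y hy i hi => ?_⟩
    interval_cases i
    simpa using hy
  | succ K ih =>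
    obtain ⟨δ1, hδ1, h1⟩ := ih
    have hc : ContinuousAt (A.f^[K+1]) x := (A.hf.iterate (K+1)).continuousAt
    rw [Metric.continuousAt_iff] at hc
    obtain ⟨δ2, hδ2, h2⟩ := hc ε hε
    refine ⟨min δ1 δ2, lt_min hδ1 hδ2, fun y hy i hi => ?_⟩
    rcases Nat.lt_succ_iff_lt_or_eq.mp (Nat.lt_succ_of_le hi) with hlt | rfl
    · exact h1 y (lt_of_lt_of_le hy (min_le_left _ _)) i (by omega)
    · have := h2 (show dist y x < δ2 by rw [dist_comm]; exact lt_of_lt_of_le hy (min_le_right _ _))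
      rw [dist_comm]
      exact this

lemma equicont (x : X) {ε : ℝ} (hε : 0 < ε) :
    ∃ δ > 0, ∀ y, dist x y < δ → A.dd x y < ε := by
  have hb1 := A.b_pos 1
  obtain ⟨i1, hi1⟩ := A.attract x (min (ε/4) (A.b 1)) (lt_min (by linarith) hb1)
  obtain ⟨M, hM⟩ := A.unif (ε/4) (by linarith)
  obtain ⟨δ, hδ, hcont⟩ := A.iter_cont x (i1 + M) (lt_min (show (0:ℝ) < ε/2 by linarith) hb1)
  refine ⟨δ, hδ, fun y hy => ?_⟩
  have key : ∀ s : ℕ, dist (A.f^[s] x) (A.f^[s] y) ≤ ε/2 := by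
    intro s
    rcases le_or_gt s (i1 + M) with hs | hs
    · exact le_trans (hcont y hy s hs).le (min_le_left _ _)
    · have h1 : dist (A.f^[s] x) A.xb < ε/4 :=
        lt_of_lt_of_le (hi1 s (by omega)) (min_le_left _ _)
      have hy1 : dist (A.f^[i1] x) (A.f^[i1] y) < A.b 1 :=
        lt_of_lt_of_le (hcont y hy i1 (by omega)) (min_le_right _ _)
      have hx1 : dist (A.f^[i1] x) A.xb < A.b 1 :=
        lt_of_lt_of_le (hi1 i1 (le_refl _)) (min_le_right _ _)
      have hzy : dist (A.f^[i1] y) A.xb < A.r0 := by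
        have htri := dist_triangle (A.f^[i1] y) (A.f^[i1] x) A.xb
        have hb0 : A.b 1 + A.b 1 ≤ A.r0 := by
          have := A.b_succ 0
          have := A.b_le_quarter 0
          have h1' : A.b 1 = A.b 0 / 2 := A.b_succ 0
          have h2' : A.b 0 ≤ A.r0 / 4 := A.b_le_quarter 0
          have := A.r0pos
          linarith
        rw [dist_comm (A.f^[i1] y) (A.f^[i1] x)] at htri
        linarith
      have h2 : dist (A.f^[s] y) A.xb < ε/4 := by
        have hh := hM (A.f^[i1] y) hzy (s - i1) (by omega)
        rw [← Function.iterate_add_apply] at hh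
        have : s - i1 + i1 = s := by omega
        rw [this] at hh
        exact hh
      have htri := dist_triangle (A.f^[s] x) A.xb (A.f^[s] y)
      rw [dist_comm A.xb (A.f^[s] y)] at htri
      linarith
  have hle : A.dd x y ≤ ε/2 := ciSup_le key
  linarith

/-! ### the gauge and the chain metric -/

noncomputable def gg (x y : X) : ℝ := max (A.phi x) (A.phi y) * min (A.dd x y) 1

lemma gg_nonneg (x y : X) : 0 ≤ A.gg x y := by
  apply mul_nonneg
  · exact le_trans (A.phi_nonneg x) (le_max_left _ _)
  · exact le_min (A.dd_nonneg x y) (by norm_num)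

lemma gg_self (x : X) : A.gg x x = 0 := by
  unfold gg
  rw [A.dd_self]
  norm_num

lemma gg_comm (x y : X) : A.gg x y = A.gg y x := by
  unfold gg
  rw [max_comm, A.dd_comm]

lemma gg_contract (x y : X) : A.gg (A.f x) (A.f y) ≤ (1/2) * A.gg x y := by
  unfold gg
  have h1 : max (A.phi (A.f x)) (A.phi (A.f y)) ≤ (1/2) * max (A.phi x) (A.phi y) := by
    apply max_le
    · have := A.phi_f x
      have h2 : A.phi x ≤ max (A.phi x) (A.phi y) := le_max_left _ _
      linarith
    · have := A.phi_f y
      have h2 : A.phi y ≤ max (A.phi x) (A.phi y) := le_max_right _ _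
      linarith
  have h2 : min (A.dd (A.f x) (A.f y)) 1 ≤ min (A.dd x y) 1 := by
    apply min_le_min (A.dd_f x y) (le_refl _)
  have h3 : (0:ℝ) ≤ min (A.dd (A.f x) (A.f y)) 1 :=
    le_min (A.dd_nonneg _ _) (by norm_num)
  have h4 : (0:ℝ) ≤ (1/2) * max (A.phi x) (A.phi y) := by
    have := le_trans (A.phi_nonneg x) (le_max_left (A.phi x) (A.phi y))
    linarith
  calc max (A.phi (A.f x)) (A.phi (A.f y)) * min (A.dd (A.f x) (A.f y)) 1
      ≤ ((1/2) * max (A.phi x) (A.phi y)) * min (A.dd (A.f x) (A.f y)) 1 :=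
        mul_le_mul_of_nonneg_right h1 h3
    _ ≤ ((1/2) * max (A.phi x) (A.phi y)) * min (A.dd x y) 1 :=
        mul_le_mul_of_nonneg_left h2 h4
    _ = (1/2) * (max (A.phi x) (A.phi y) * min (A.dd x y) 1) := by ring

noncomputable def cost (A : MSetup X) : List X → X → X → ℝ
  | [], x, y => A.gg x y
  | z :: l, x, y => A.gg x z + cost A l z y

lemma cost_nil (x y : X) : A.cost [] x y = A.gg x y := rfl

lemma cost_cons (z : X) (l : List X) (x y : X) :
    A.cost (z :: l) x y = A.gg x z + A.cost l z y := rfl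

lemma cost_nonneg (l : List X) : ∀ x y : X, 0 ≤ A.cost l x y := by
  induction l with
  | nil => intro x y; exact A.gg_nonneg x y
  | cons z l ih =>
    intro x y
    have h1 := A.gg_nonneg x z
    have h2 := ih z y
    rw [A.cost_cons]
    linarith

noncomputable def DD (x y : X) : ℝ := ⨅ l : List X, A.cost l x y

lemma DD_bddBelow (x y : X) : BddBelow (Set.range fun l : List X => A.cost l x y) := by
  refine ⟨0, ?_⟩
  rintro r ⟨l, rfl⟩
  exact A.cost_nonneg l x y

lemma DD_le_cost (l : List X) (x y : X) : A.DD x y ≤ A.cost l x y :=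
  ciInf_le (A.DD_bddBelow x y) l

lemma DD_le_gg (x y : X) : A.DD x y ≤ A.gg x y := A.DD_le_cost [] x y

lemma DD_nonneg (x y : X) : 0 ≤ A.DD x y :=
  le_ciInf fun l => A.cost_nonneg l x y

lemma DD_self (x : X) : A.DD x x = 0 :=
  le_antisymm (by simpa [A.gg_self] using A.DD_le_gg x x) (A.DD_nonneg x x)

lemma cost_append (l₁ : List X) : ∀ (l₂ : List X) (x y z : X),
    A.cost (l₁ ++ y :: l₂) x z = A.cost l₁ x y + A.cost l₂ y z := by
  induction l₁ with
  | nil => intro l₂ x y z; simp [cost]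
  | cons w l ih =>
    intro l₂ x y z
    have he : (w :: l) ++ y :: l₂ = w :: (l ++ y :: l₂) := rfl
    rw [he, A.cost_cons, ih, A.cost_cons]
    ring

lemma cost_reverse (l : List X) : ∀ x y : X, A.cost l x y = A.cost l.reverse y x := by
  induction l with
  | nil => intro x y; exact A.gg_comm x y
  | cons z l ih =>
    intro x y
    have h1 : (z :: l).reverse = l.reverse ++ z :: ([] : List X) := by simp
    rw [h1, A.cost_append l.reverse ([] : List X) y z x, A.cost_cons, A.cost_nil,
      ih z y, A.gg_comm x z]
    ring

lemma DD_comm (x y : X) : A.DD x y = A.DD y x := by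
  have h : ∀ a b : X, A.DD a b ≤ A.DD b a := by
    intro a b
    apply le_ciInf
    intro l
    rw [A.cost_reverse l b a]
    exact A.DD_le_cost l.reverse a b
  exact le_antisymm (h x y) (h y x)

lemma DD_triangle (x y z : X) : A.DD x z ≤ A.DD x y + A.DD y z := by
  refine le_of_forall_pos_le_add fun ε hε => ?_
  have h1 : A.DD x y < A.DD x y + ε/2 := by linarith
  have h2 : A.DD y z < A.DD y z + ε/2 := by linarith
  obtain ⟨l₁, hl₁⟩ := exists_lt_of_ciInf_lt h1
  obtain ⟨l₂, hl₂⟩ := exists_lt_of_ciInf_lt h2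
  have h3 := A.DD_le_cost (l₁ ++ y :: l₂) x z
  rw [A.cost_append] at h3
  linarith

lemma cost_map (l : List X) : ∀ x y : X,
    A.cost (l.map A.f) (A.f x) (A.f y) ≤ (1/2) * A.cost l x y := by
  induction l with
  | nil => intro x y; exact A.gg_contract x y
  | cons z l ih =>
    intro x y
    simp only [List.map_cons]
    rw [A.cost_cons, A.cost_cons]
    have h1 := A.gg_contract x z
    have h2 := ih z y
    linarith

lemma DD_contract (x y : X) : A.DD (A.f x) (A.f y) ≤ (1/2) * A.DD x y := by
  have h : ∀ l : List X, A.DD (A.f x) (A.f y) ≤ (1/2) * A.cost l x y := by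
    intro l
    exact le_trans (A.DD_le_cost (l.map A.f) (A.f x) (A.f y)) (A.cost_map l x y)
  have h2 : (2:ℝ) * A.DD (A.f x) (A.f y) ≤ A.DD x y := by
    apply le_ciInf
    intro l
    have := h l
    linarith
  linarith

lemma abs_sub_le_cost {Φ : X → ℝ} (hΦ : ∀ a b : X, |Φ a - Φ b| ≤ A.gg a b)
    (l : List X) : ∀ x y : X, |Φ x - Φ y| ≤ A.cost l x y := by
  induction l with
  | nil => intro x y; exact hΦ x y
  | cons z l ih =>
    intro x y
    have h1 := hΦ x z
    have h2 := ih z y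
    have h3 := abs_sub_le (Φ x) (Φ z) (Φ y)
    rw [A.cost_cons]
    linarith

lemma DD_ge_potential {Φ : X → ℝ} (hΦ : ∀ a b : X, |Φ a - Φ b| ≤ A.gg a b)
    (x y : X) : |Φ x - Φ y| ≤ A.DD x y :=
  le_ciInf fun l => A.abs_sub_le_cost hΦ l x y


/-! ### window potentials -/

noncomputable def gp (m : ℤ) : ℝ := A.R m - A.R (m+1)

lemma gp_pos {m : ℤ} (hm : 1 ≤ m) : 0 < A.gp m := sub_pos.mpr (A.R_succ_lt hm)

noncomputable def KN (N : ℤ) : ℕ := A.S (A.jj (max N 1) + 2) + 1 + N.natAbs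

noncomputable def uu (N : ℤ) (z : X) : ℝ :=
  ∑ i ∈ Finset.range (A.KN N),
    if 1 ≤ N + (i:ℤ) then
      clamp ((dist (A.f^[i] z) A.xb - A.R (N + 1 + i)) / A.gp (N + i))
    else 0

noncomputable def Lam (N : ℤ) : ℝ :=
  ∑ i ∈ Finset.range (A.KN N),
    if 1 ≤ N + (i:ℤ) then (A.gp (N + i))⁻¹ else 0

lemma uu_nonneg (N : ℤ) (z : X) : 0 ≤ A.uu N z := by
  apply Finset.sum_nonneg
  intro i _
  split_ifs
  · exact clamp_nonneg _
  · exact le_refl _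

lemma uu_eq_zero {N : ℤ} {z : X} (h : z ∈ A.W (N+1)) : A.uu N z = 0 := by
  apply Finset.sum_eq_zero
  intro i _
  split_ifs with h1
  · apply clamp_of_nonpos
    have h2 : 1 ≤ (N+1) + (i:ℤ) := by omega
    have h3 := h i h2
    have hgp : 0 < A.gp (N + i) := A.gp_pos h1
    apply div_nonpos_of_nonpos_of_nonneg _ hgp.le
    have harg : (N+1) + (i:ℤ) = N + 1 + (i:ℤ) := by ring
    rw [harg] at h3
    linarith
  · rfl

lemma uu_pos_not_mem {N : ℤ} {z : X} (h : 0 < A.uu N z) : z ∉ A.W (N+1) := by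
  intro hmem
  rw [A.uu_eq_zero hmem] at h
  exact lt_irrefl _ h

lemma one_le_uu {N : ℤ} {z : X} (h : z ∉ A.W N) : 1 ≤ A.uu N z := by
  have hex : ¬ (∀ i : ℕ, i < A.S (A.jj (max N 1) + 2) + 1 + N.natAbs →
      (1 ≤ N + (i:ℤ) → N + (i:ℤ) ≤ (A.S (A.jj (max N 1) + 2) : ℤ) →
        dist (A.f^[i] z) A.xb < A.R (N + i))) := by
    intro hall
    exact h (A.W_finite_char N hall)
  push_neg at hex
  obtain ⟨i, hiK, h1, _h2, h3⟩ := hex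
  have hterm : (if 1 ≤ N + (i:ℤ) then
      clamp ((dist (A.f^[i] z) A.xb - A.R (N + 1 + i)) / A.gp (N + i)) else 0) = 1 := by
    rw [if_pos h1]
    apply clamp_of_one_le
    rw [le_div_iff₀ (A.gp_pos h1)]
    have hgp : A.gp (N + i) = A.R (N + i) - A.R (N + i + 1) := rfl
    have harg : N + (i:ℤ) + 1 = N + 1 + (i:ℤ) := by ring
    rw [hgp, harg]
    linarith
  have hmem : i ∈ Finset.range (A.KN N) := Finset.mem_range.mpr hiK
  calc (1:ℝ) = _ := hterm.symm
    _ ≤ A.uu N z := by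
        apply Finset.single_le_sum (f := fun i : ℕ => if 1 ≤ N + (i:ℤ) then
          clamp ((dist (A.f^[i] z) A.xb - A.R (N + 1 + i)) / A.gp (N + i)) else 0) _ hmem
        intro j _
        split_ifs
        · exact clamp_nonneg _
        · exact le_refl _

lemma Lam_nonneg (N : ℤ) : 0 ≤ A.Lam N := by
  apply Finset.sum_nonneg
  intro i _
  split_ifs with h1
  · exact (inv_nonneg).mpr (A.gp_pos h1).le
  · exact le_refl _

lemma uu_lip (N : ℤ) (a b : X) : |A.uu N a - A.uu N b| ≤ A.Lam N * A.dd a b := by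
  unfold uu Lam
  rw [← Finset.sum_sub_distrib, Finset.sum_mul]
  refine le_trans (Finset.abs_sum_le_sum_abs _ _) (Finset.sum_le_sum ?_)
  intro i _
  split_ifs with h1
  · refine le_trans (clamp_lip _ _) ?_
    have hgp := A.gp_pos h1
    rw [div_sub_div_same]
    have h2 : dist (A.f^[i] a) A.xb - A.R (N + 1 + i) -
        (dist (A.f^[i] b) A.xb - A.R (N + 1 + i)) =
        dist (A.f^[i] a) A.xb - dist (A.f^[i] b) A.xb := by ring
    rw [h2, abs_div, abs_of_pos hgp, div_eq_mul_inv, mul_comm]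
    exact mul_le_mul_of_nonneg_left (A.dd_lip a b i) (inv_nonneg.mpr hgp.le)
  · simp

lemma min_one_lip {N : ℤ} (a b : X) :
    |min (A.uu N a) 1 - min (A.uu N b) 1| ≤ min (A.Lam N * A.dd a b) 1 := by
  apply le_min
  · refine le_trans ?_ (A.uu_lip N a b)
    have := abs_min_sub_min_le_max (A.uu N a) 1 (A.uu N b) 1
    simpa using this
  · have h1 : 0 ≤ min (A.uu N a) 1 := le_min (A.uu_nonneg N a) zero_le_one
    have h2 : 0 ≤ min (A.uu N b) 1 := le_min (A.uu_nonneg N b) zero_le_one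
    have h3 : min (A.uu N a) 1 ≤ 1 := min_le_right _ _
    have h4 : min (A.uu N b) 1 ≤ 1 := min_le_right _ _
    rw [abs_le]
    constructor <;> linarith

lemma min_mul_min_le {c d : ℝ} (hc1 : 1 ≤ c) (hd : 0 ≤ d) {L : ℝ} (hL : L ≤ c) :
    min (L * d) 1 ≤ c * min d 1 := by
  rcases le_total d 1 with hdd | hdd
  · rw [min_eq_left hdd]
    refine le_trans (min_le_left _ _) ?_
    exact mul_le_mul_of_nonneg_right hL hd
  · rw [min_eq_right hdd]
    refine le_trans (min_le_right _ _) ?_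
    linarith

lemma potA (N : ℤ) : ∃ θ : ℝ, 0 < θ ∧
    ∀ x y : X, x ∈ A.W (N+1) → y ∉ A.W N → θ ≤ A.DD x y := by
  set C : ℝ := max (A.Lam N) 1 with hC
  have hC1 : (1:ℝ) ≤ C := le_max_right _ _
  have hC0 : (0:ℝ) < C := by linarith
  have hLC : A.Lam N ≤ C := le_max_left _ _
  have hp2 : (0:ℝ) < (2:ℝ)^(-N) := zpow_pos (by norm_num) _
  set θ : ℝ := (2:ℝ)^(-N) / C with hθ
  have hθpos : 0 < θ := div_pos hp2 hC0
  set Φ : X → ℝ := fun z => θ * min (A.uu N z) 1 with hΦdef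
  have hΦ : ∀ a b : X, |Φ a - Φ b| ≤ A.gg a b := by
    intro a b
    by_cases hab : min (A.uu N a) 1 = min (A.uu N b) 1
    · simp only [hΦdef, hab, sub_self, abs_zero]
      exact A.gg_nonneg a b
    · have hnm : a ∉ A.W (N+1) ∨ b ∉ A.W (N+1) := by
        by_contra hboth
        push_neg at hboth
        rw [A.uu_eq_zero hboth.1, A.uu_eq_zero hboth.2] at hab
        exact hab rfl
      have hphi : (2:ℝ)^(-N) ≤ max (A.phi a) (A.phi b) := by
        rcases hnm with hna | hnb
        · exact le_trans (A.phi_ge_of_not_mem hna) (le_max_left _ _)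
        · exact le_trans (A.phi_ge_of_not_mem hnb) (le_max_right _ _)
      have hmin := A.min_one_lip (N := N) a b

      have hgoal : |Φ a - Φ b| = θ * |min (A.uu N a) 1 - min (A.uu N b) 1| := by
        simp only [hΦdef]
        rw [← mul_sub, abs_mul, abs_of_pos hθpos]
      rw [hgoal]
      have hstep : θ * |min (A.uu N a) 1 - min (A.uu N b) 1| ≤
          θ * min (A.Lam N * A.dd a b) 1 := mul_le_mul_of_nonneg_left hmin hθpos.le
      refine le_trans hstep ?_
      have hmid : min (A.Lam N * A.dd a b) 1 ≤ C * min (A.dd a b) 1 :=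
        min_mul_min_le hC1 (A.dd_nonneg a b) hLC
      have h2N : θ * (C * min (A.dd a b) 1) = (2:ℝ)^(-N) * min (A.dd a b) 1 := by
        rw [hθ]
        field_simp
      calc θ * min (A.Lam N * A.dd a b) 1 ≤ θ * (C * min (A.dd a b) 1) :=
            mul_le_mul_of_nonneg_left hmid hθpos.le
        _ = (2:ℝ)^(-N) * min (A.dd a b) 1 := h2N
        _ ≤ max (A.phi a) (A.phi b) * min (A.dd a b) 1 :=
            mul_le_mul_of_nonneg_right hphi (le_min (A.dd_nonneg a b) zero_le_one)
        _ = A.gg a b := rfl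
  refine ⟨θ, hθpos, fun x y hx hy => ?_⟩
  have hpot := A.DD_ge_potential hΦ x y
  have hΦx : Φ x = 0 := by
    simp only [hΦdef, A.uu_eq_zero hx]
    norm_num
  have hΦy : Φ y = θ := by
    simp only [hΦdef, min_eq_right (A.one_le_uu hy)]
    ring
  rw [hΦx, hΦy, zero_sub, abs_neg, abs_of_pos hθpos] at hpot
  exact hpot

lemma potB (M : ℤ) {ε : ℝ} (hε : 0 < ε) (x : X) :
    ∃ θ : ℝ, 0 < θ ∧ ∀ y : X, y ∉ A.W M → 2*ε ≤ dist y x → θ ≤ A.DD x y := by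
  set vv : X → ℝ := fun z => clamp ((dist z x - ε) / ε) with hvv
  have hvx : vv x = 0 := by
    simp only [hvv]
    apply clamp_of_nonpos
    rw [dist_self]
    apply div_nonpos_of_nonpos_of_nonneg <;> linarith
  have hv01 : ∀ z, 0 ≤ vv z ∧ vv z ≤ 1 := fun z => ⟨clamp_nonneg _, clamp_le_one _⟩
  have hvlip : ∀ a b : X, |vv a - vv b| ≤ min (ε⁻¹ * A.dd a b) 1 := by
    intro a b
    apply le_min
    · refine le_trans (clamp_lip _ _) ?_
      rw [div_sub_div_same]
      have h2 : dist a x - ε - (dist b x - ε) = dist a x - dist b x := by ring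
      rw [h2, abs_div, abs_of_pos hε, div_eq_mul_inv, mul_comm]
      refine mul_le_mul_of_nonneg_left ?_ (inv_nonneg.mpr hε.le)
      exact le_trans (abs_dist_sub_le a b x) (A.dist_le_dd a b)
    · have h1 := hv01 a
      have h2 := hv01 b
      rw [abs_le]
      constructor <;> linarith [h1.1, h1.2, h2.1, h2.2]
  set C : ℝ := max (A.Lam M) (max ε⁻¹ 1) with hC
  have hC1 : (1:ℝ) ≤ C := le_trans (le_max_right _ _) (le_max_right _ _)
  have hCe : ε⁻¹ ≤ C := le_trans (le_max_left _ _) (le_max_right _ _)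
  have hLC : A.Lam M ≤ C := le_max_left _ _
  have hC0 : (0:ℝ) < C := by linarith
  have hp2 : (0:ℝ) < (2:ℝ)^(-M) := zpow_pos (by norm_num) _
  set θ : ℝ := (2:ℝ)^(-M) / C with hθ
  have hθpos : 0 < θ := div_pos hp2 hC0
  set Φ : X → ℝ := fun z => θ * min (min (A.uu M z) 1) (vv z) with hΦdef
  have hΦ : ∀ a b : X, |Φ a - Φ b| ≤ A.gg a b := by
    intro a b
    by_cases hab : min (min (A.uu M a) 1) (vv a) = min (min (A.uu M b) 1) (vv b)
    · simp only [hΦdef, hab, sub_self, abs_zero]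
      exact A.gg_nonneg a b
    · have hnm : a ∉ A.W (M+1) ∨ b ∉ A.W (M+1) := by
        by_contra hboth
        push_neg at hboth
        rw [A.uu_eq_zero hboth.1, A.uu_eq_zero hboth.2] at hab
        apply hab
        have hz : ((0:ℝ) ⊓ 1) = 0 := by norm_num
        rw [hz, min_eq_left (hv01 a).1, min_eq_left (hv01 b).1]
      have hphi : (2:ℝ)^(-M) ≤ max (A.phi a) (A.phi b) := by
        rcases hnm with hna | hnb
        · exact le_trans (A.phi_ge_of_not_mem hna) (le_max_left _ _)
        · exact le_trans (A.phi_ge_of_not_mem hnb) (le_max_right _ _)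
      have hmin1 := A.min_one_lip (N := M) a b
      have hvab := hvlip a b
      have hmm := abs_min_sub_min_le_max (min (A.uu M a) 1) (vv a) (min (A.uu M b) 1) (vv b)
      have hkey : |min (min (A.uu M a) 1) (vv a) - min (min (A.uu M b) 1) (vv b)| ≤
          min (C * A.dd a b) 1 := by
        refine le_trans hmm (max_le ?_ ?_)
        · refine le_trans hmin1 (le_min ?_ ?_)
          · refine le_trans (min_le_left _ _) ?_
            exact mul_le_mul_of_nonneg_right hLC (A.dd_nonneg a b)
          · exact min_le_right _ _
        · refine le_trans hvab (le_min ?_ ?_)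
          · refine le_trans (min_le_left _ _) ?_
            exact mul_le_mul_of_nonneg_right hCe (A.dd_nonneg a b)
          · exact min_le_right _ _
      have hgoal : |Φ a - Φ b| = θ * |min (min (A.uu M a) 1) (vv a) -
          min (min (A.uu M b) 1) (vv b)| := by
        simp only [hΦdef]
        rw [← mul_sub, abs_mul, abs_of_pos hθpos]
      rw [hgoal]
      have hmid : min (C * A.dd a b) 1 ≤ C * min (A.dd a b) 1 :=
        min_mul_min_le hC1 (A.dd_nonneg a b) (le_refl C)
      have h2N : θ * (C * min (A.dd a b) 1) = (2:ℝ)^(-M) * min (A.dd a b) 1 := by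
        rw [hθ]
        field_simp
      calc θ * |min (min (A.uu M a) 1) (vv a) - min (min (A.uu M b) 1) (vv b)|
          ≤ θ * min (C * A.dd a b) 1 := mul_le_mul_of_nonneg_left hkey hθpos.le
        _ ≤ θ * (C * min (A.dd a b) 1) := mul_le_mul_of_nonneg_left hmid hθpos.le
        _ = (2:ℝ)^(-M) * min (A.dd a b) 1 := h2N
        _ ≤ max (A.phi a) (A.phi b) * min (A.dd a b) 1 :=
            mul_le_mul_of_nonneg_right hphi (le_min (A.dd_nonneg a b) zero_le_one)
        _ = A.gg a b := rfl
  refine ⟨θ, hθpos, fun y hyW hyd => ?_⟩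
  have hpot := A.DD_ge_potential hΦ x y
  have hΦx : Φ x = 0 := by
    simp only [hΦdef, hvx]
    rw [min_eq_right (le_min (A.uu_nonneg M x) zero_le_one)]
    ring
  have hΦy : Φ y = θ := by
    have h1 : min (A.uu M y) 1 = 1 := min_eq_right (A.one_le_uu hyW)
    have h2 : vv y = 1 := by
      simp only [hvv]
      apply clamp_of_one_le
      rw [le_div_iff₀ hε]
      linarith
    simp only [hΦdef, h1, h2]
    norm_num
  rw [hΦx, hΦy, zero_sub, abs_neg, abs_of_pos hθpos] at hpot
  exact hpot


/-! ### topological equivalence -/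

lemma upper (x : X) {ε : ℝ} (hε : 0 < ε) :
    ∃ δ > 0, ∀ y, dist x y < δ → A.DD x y < ε := by
  by_cases hx : x = A.xb
  · subst hx
    obtain ⟨n, hn⟩ := pow_unbounded_of_one_lt ε⁻¹ (one_lt_two (α := ℝ))
    have hp : (0:ℝ) < 2^n := by positivity
    have h2 : ((2:ℝ))^(-(n:ℤ)) < ε := by
      rw [zpow_neg, zpow_natCast]
      exact (inv_lt_comm₀ hp hε).mpr hn
    set N : ℤ := max (n:ℤ) 1 with hNdef
    have hop := A.W_open N
    rw [Metric.isOpen_iff] at hop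
    obtain ⟨δ, hδ, hball⟩ := hop A.xb (A.xb_mem_W N)
    refine ⟨δ, hδ, fun y hy => ?_⟩
    have hyW : y ∈ A.W N := hball (by rw [Metric.mem_ball, dist_comm]; exact hy)
    have hphiy : A.phi y ≤ (2:ℝ)^(-N) := by
      by_cases hyb : y = A.xb
      · rw [hyb, A.phi_xb]; exact (zpow_pos (by norm_num) _).le
      · have := A.lev_ge hyb hyW
        unfold phi; rw [if_neg hyb]
        exact zpow_le_zpow_right₀ one_le_two (by omega)
    have hgg : A.gg A.xb y ≤ A.phi y := by
      unfold gg
      rw [A.phi_xb, max_eq_right (A.phi_nonneg y)]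
      exact mul_le_of_le_one_right (A.phi_nonneg y) (min_le_right _ _)
    have hNn : (2:ℝ)^(-N) ≤ (2:ℝ)^(-(n:ℤ)) :=
      zpow_le_zpow_right₀ one_le_two (by omega)
    calc A.DD A.xb y ≤ A.gg A.xb y := A.DD_le_gg _ _
      _ ≤ A.phi y := hgg
      _ ≤ (2:ℝ)^(-N) := hphiy
      _ ≤ (2:ℝ)^(-(n:ℤ)) := hNn
      _ < ε := h2
  · have hop := A.W_open (A.lev x)
    rw [Metric.isOpen_iff] at hop
    obtain ⟨δ1, hδ1, hball⟩ := hop x (A.lev_mem hx)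
    have hphix := A.phi_pos hx
    obtain ⟨δ2, hδ2, h2⟩ := A.equicont x (show 0 < ε / A.phi x by positivity)
    refine ⟨min δ1 δ2, lt_min hδ1 hδ2, fun y hy => ?_⟩
    have hyW : y ∈ A.W (A.lev x) := hball
      (by rw [Metric.mem_ball, dist_comm]; exact lt_of_lt_of_le hy (min_le_left _ _))
    have hphiy : A.phi y ≤ A.phi x := A.phi_le_of_mem hx hyW
    have hdd : A.dd x y < ε / A.phi x := h2 y (lt_of_lt_of_le hy (min_le_right _ _))
    have hmax : max (A.phi x) (A.phi y) = A.phi x := max_eq_left hphiy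
    have hfin : A.phi x * (ε / A.phi x) = ε := by field_simp
    calc A.DD x y ≤ A.gg x y := A.DD_le_gg x y
      _ = A.phi x * min (A.dd x y) 1 := by unfold gg; rw [hmax]
      _ ≤ A.phi x * A.dd x y := mul_le_mul_of_nonneg_left (min_le_left _ _) hphix.le
      _ < A.phi x * (ε / A.phi x) := mul_lt_mul_of_pos_left hdd hphix
      _ = ε := hfin

lemma lower (x : X) {ε : ℝ} (hε : 0 < ε) :
    ∃ η > 0, ∀ y, A.DD x y < η → dist x y < ε := by
  by_cases hx : x = A.xb
  · subst hx
    obtain ⟨j1, hj1⟩ := A.b_tendsto (ε * (4/5)) (by positivity)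
    set N : ℤ := (A.S j1 : ℤ) with hN
    have hN1 : (1:ℤ) ≤ N := by have := A.two_le_S j1; omega
    obtain ⟨θ, hθ, hA⟩ := A.potA N
    refine ⟨θ, hθ, fun y hy => ?_⟩
    by_cases hyW : y ∈ A.W N
    · have hd := A.W_small hN1 hyW
      have hjn : j1 ≤ A.jj N := A.jj_ge (le_refl _)
      have hb := A.b_anti hjn
      have hr := A.R_le_bound hN1
      rw [dist_comm]
      nlinarith
    · exact absurd hy (not_lt.mpr (hA A.xb y (A.xb_mem_W _) hyW))
  · set N : ℤ := A.lev x + 1 with hN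
    obtain ⟨θ1, hθ1, hA⟩ := A.potA N
    obtain ⟨θ2, hθ2, hB⟩ := A.potB (N+1) (show (0:ℝ) < ε/2 by linarith) x
    refine ⟨min θ1 θ2, lt_min hθ1 hθ2, fun y hy => ?_⟩
    have hxW : x ∉ A.W N := by
      intro hmem
      have := A.lev_ge hx hmem
      omega
    by_cases hyW : y ∈ A.W (N+1)
    · exfalso
      have h1 := hA y x hyW hxW
      rw [A.DD_comm y x] at h1
      have h2 := lt_of_lt_of_le hy (min_le_left _ _)
      linarith
    · by_cases hyd : 2*(ε/2) ≤ dist y x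
      · exfalso
        have h1 := hB y hyW hyd
        have h2 := lt_of_lt_of_le hy (min_le_right _ _)
        linarith
      · push_neg at hyd
        rw [dist_comm]
        linarith

lemma DD_eq_zero {x y : X} (h : A.DD x y = 0) : x = y := by
  by_contra hne
  have hd : 0 < dist x y := dist_pos.mpr hne
  obtain ⟨η, hη, hl⟩ := A.lower x (half_pos hd)
  have := hl y (by rw [h]; exact hη)
  linarith

end MSetup

end BanachTConAux

open BanachTConAux

/-- If `f` is a continuous t-contractive self-map of a metric space with fixed point
`xbar`, and there is a neighborhood `O` of `xbar` such that for every open cover of `X`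
the iterates of all points of `O` eventually fall simultaneously in one member of the
cover, then there is a topologically equivalent metric making `f` a Banach contraction,
and `xbar` is the unique fixed point of `f`. -/
theorem banach_contraction_of_tContractive
    {X : Type*} [m : MetricSpace X] (f : X → X) (hf : Continuous f)
    (ht : TContractive f) (xbar : X) (hfix : f xbar = xbar)
    (hO : ∃ O ∈ 𝓝 xbar, ∀ γ : Set (Set X), (∀ U ∈ γ, IsOpen U) → ⋃₀ γ = Set.univ →
      ∃ n : ℕ, ∀ a ∈ O, ∀ b ∈ O, ∀ i ≥ n, ∃ U ∈ γ, f^[i] a ∈ U ∧ f^[i] b ∈ U) :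
    ∃ m' : MetricSpace X,
      m'.toUniformSpace.toTopologicalSpace = m.toUniformSpace.toTopologicalSpace ∧
      (∃ k : ℝ, 0 ≤ k ∧ k < 1 ∧
        ∀ x y : X, m'.dist (f x) (f y) ≤ k * m'.dist x y) ∧
      f xbar = xbar ∧ ∀ y : X, f y = y → y = xbar := by
  classical
  -- the standard two-set cover
  have hopen : ∀ ε : ℝ, 0 < ε → ∀ U ∈ ({Metric.ball xbar ε, {y : X | ε/2 < dist y xbar}} :
      Set (Set X)), IsOpen U := by
    intro ε hε U hU
    simp only [Set.mem_insert_iff, Set.mem_singleton_iff] at hU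
    rcases hU with rfl | rfl
    · exact Metric.isOpen_ball
    · exact isOpen_lt continuous_const (Continuous.dist continuous_id continuous_const)
  have hcov : ∀ ε : ℝ, 0 < ε →
      ⋃₀ ({Metric.ball xbar ε, {y : X | ε/2 < dist y xbar}} : Set (Set X)) = Set.univ := by
    intro ε hε
    apply Set.eq_univ_of_forall
    intro y
    rcases lt_or_ge (dist y xbar) ε with h | h
    · exact ⟨Metric.ball xbar ε, Set.mem_insert _ _, Metric.mem_ball.mpr h⟩
    · refine ⟨{y : X | ε/2 < dist y xbar}, ?_, ?_⟩
      · simp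
      · simp only [Set.mem_setOf_eq]; linarith
  have attract : ∀ x : X, ∀ ε : ℝ, 0 < ε → ∃ n : ℕ, ∀ i, n ≤ i →
      dist (f^[i] x) xbar < ε := by
    intro x ε hε
    obtain ⟨n, hn⟩ := ht _ (hopen ε hε) (hcov ε hε) x xbar
    refine ⟨n, fun i hi => ?_⟩
    obtain ⟨U, hU, hxi, hxb⟩ := hn i hi
    rw [Function.iterate_fixed hfix] at hxb
    simp only [Set.mem_insert_iff, Set.mem_singleton_iff] at hU
    rcases hU with rfl | rfl
    · exact Metric.mem_ball.mp hxi
    · exfalso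
      simp only [Set.mem_setOf_eq, dist_self] at hxb
      linarith
  -- uniqueness of the fixed point
  have uniq : ∀ y : X, f y = y → y = xbar := by
    intro y hy
    by_contra hne
    have hd : 0 < dist y xbar := dist_pos.mpr hne
    obtain ⟨n, hn⟩ := attract y (dist y xbar) hd
    have hiter : f^[n] y = y := Function.iterate_fixed hy n
    have := hn n (le_refl n)
    rw [hiter] at this
    linarith
  -- the uniform attraction near the fixed point
  obtain ⟨O, hOn, hOp⟩ := hO
  obtain ⟨r0, hr0, hball⟩ := Metric.mem_nhds_iff.mp hOn
  have hxbO : xbar ∈ O := mem_of_mem_nhds hOn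
  have unif : ∀ ε : ℝ, 0 < ε → ∃ n : ℕ, ∀ z : X, dist z xbar < r0 →
      ∀ i, n ≤ i → dist (f^[i] z) xbar < ε := by
    intro ε hε
    obtain ⟨n, hn⟩ := hOp _ (hopen ε hε) (hcov ε hε)
    refine ⟨n, fun z hz i hi => ?_⟩
    have hzO : z ∈ O := hball (Metric.mem_ball.mpr hz)
    obtain ⟨U, hU, hzi, hxb⟩ := hn z hzO xbar hxbO i hi
    rw [Function.iterate_fixed hfix] at hxb
    simp only [Set.mem_insert_iff, Set.mem_singleton_iff] at hU
    rcases hU with rfl | rfl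
    · exact Metric.mem_ball.mp hzi
    · exfalso
      simp only [Set.mem_setOf_eq, dist_self] at hxb
      linarith
  set A : MSetup X := ⟨f, hf, xbar, hfix, attract, r0, hr0, unif⟩ with hA
  have H : ∀ s : Set X, IsOpen s ↔ ∀ x ∈ s, ∃ ε > 0, ∀ y, A.DD x y < ε → y ∈ s := by
    intro s
    constructor
    · intro hs x hx
      obtain ⟨ε0, hε0, hball'⟩ := Metric.isOpen_iff.mp hs x hx
      obtain ⟨η, hη, h2⟩ := A.lower x hε0
      refine ⟨η, hη, fun y hy => hball' ?_⟩
      rw [Metric.mem_ball, dist_comm]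
      exact h2 y hy
    · intro hs
      rw [Metric.isOpen_iff]
      intro x hx
      obtain ⟨ε, hε, hsub⟩ := hs x hx
      obtain ⟨δ, hδ, h1⟩ := A.upper x hε
      refine ⟨δ, hδ, fun y hy => hsub y ?_⟩
      exact h1 y (by rw [Metric.mem_ball, dist_comm] at hy; exact hy)
  refine ⟨MetricSpace.ofDistTopology A.DD A.DD_self A.DD_comm A.DD_triangle H
    (fun x y h => A.DD_eq_zero h), rfl,
    ⟨1/2, by norm_num, by norm_num, fun x y => A.DD_contract x y⟩, hfix, uniq⟩
end
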